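/- arXiv:1404.5155 — 14 statements merged into one kernel-verified Lean document; each statement's English description precedes it below -/
import Mathlib

section
/- Consider mechanism M1 (full information, top-K allocation, binary action space) with N users, reward R > 0, K ≥ 1, participation cost c > 0, and pairwise distinct types q_1 > q_2 > … > q_N > 0. If R > Kc, then the profile in which x_i = q_i for all i ≤ min(K, N) and x_i = 0 for all i > K is a pure Nash equilibrium, and it is the unique pure Nash equilibrium of the game. -/
open Finset

open scoped Classical in
/-- Top-K allocation reward with deterministic index tie-breaking:
user `i` gets `R / K` if she contributes positively and the number of users
with strictly larger contribution plus the number of earlier-indexed users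
with equal contribution is less than `K`. -/
noncomputable def topKReward {N : ℕ} (K : ℕ) (R : ℝ) (x : Fin N → ℝ) (i : Fin N) : ℝ :=
  if 0 < x i ∧
      ((univ.filter (fun j => x i < x j)).card +
        (univ.filter (fun j => j < i ∧ x j = x i)).card < K)
  then R / K else 0

/-- Utility in mechanism M1: top-K reward minus linear cost. -/
noncomputable def utilM1 {N : ℕ} (K : ℕ) (R c : ℝ) (q x : Fin N → ℝ) (i : Fin N) : ℝ :=
  topKReward K R x i - c * x i / q i

/-- Pure Nash equilibrium of mechanism M1 (binary action space `{0, q i}`):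
every action is binary-feasible and no user can strictly increase her
utility by unilaterally switching her own action. -/
noncomputable def isPNE_M1 {N : ℕ} (K : ℕ) (R c : ℝ) (q : Fin N → ℝ) (x : Fin N → ℝ) : Prop :=
  (∀ i, x i = 0 ∨ x i = q i) ∧
  ∀ i, ∀ y : ℝ, (y = 0 ∨ y = q i) →
    utilM1 K R c q (Function.update x i y) i ≤ utilM1 K R c q x i

open scoped Classical in
private lemma card_val_lt {N : ℕ} (m : ℕ) (hm : m ≤ N) :
    (univ.filter (fun j : Fin N => (j : ℕ) < m)).card = m := by
  have h : (univ.filter (fun j : Fin N => (j : ℕ) < m))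
      = Finset.attachFin (Finset.range m)
          (fun a ha => lt_of_lt_of_le (Finset.mem_range.mp ha) hm) := by
    ext j
    simp [Finset.mem_attachFin]
  rw [h, Finset.card_attachFin, Finset.card_range]

theorem stmt_1 (N K : ℕ) (hK : 1 ≤ K) (R c : ℝ) (hR : 0 < R) (hc : 0 < c)
    (q : Fin N → ℝ) (hq1 : ∀ i, q i ≤ 1) (hq0 : ∀ i, 0 < q i)
    (hsort : ∀ i j : Fin N, i < j → q j < q i)
    (hRKc : K * c < R) :
    isPNE_M1 K R c q (fun i : Fin N => if (i : ℕ) < K then q i else 0) ∧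
      ∀ x : Fin N → ℝ, isPNE_M1 K R c q x →
        x = fun i : Fin N => if (i : ℕ) < K then q i else 0 := by
  classical
  have hKpos : (0 : ℝ) < K := by exact_mod_cast hK
  have hcltRK : c < R / K := by
    rw [lt_div_iff₀ hKpos]
    nlinarith [hRKc]
  have hqiff : ∀ i j : Fin N, q i < q j ↔ j < i := by
    intro i j
    constructor
    · intro h
      rcases lt_trichotomy j i with h1 | h1 | h1
      · exact h1
      · subst h1; exact absurd h (lt_irrefl _)
      · exact absurd (hsort i j h1) (not_lt.mpr h.le)
    · exact fun h => hsort j i h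
  have hcost : ∀ i : Fin N, c * q i / q i = c := by
    intro i
    rw [mul_div_assoc, div_self (hq0 i).ne', mul_one]
  -- key reward formula for binary profiles at a participating index
  have key : ∀ x : Fin N → ℝ, (∀ j, x j = 0 ∨ x j = q j) → ∀ i, x i = q i →
      topKReward K R x i
        = if (univ.filter (fun j => x j ≠ 0 ∧ j < i)).card < K then R / K else 0 := by
    intro x hb i hi
    have h1 : (univ.filter (fun j => x i < x j))
        = (univ.filter (fun j => x j ≠ 0 ∧ j < i)) := by
      apply Finset.filter_congr
      intro j _
      rcases hb j with h | h
      · simp [h, hi, not_lt.mpr (hq0 i).le]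
      · rw [h, hi]
        constructor
        · intro hlt
          exact ⟨(hq0 j).ne', (hqiff i j).mp hlt⟩
        · rintro ⟨_, hji⟩
          exact (hqiff i j).mpr hji
    have h2 : (univ.filter (fun j => j < i ∧ x j = x i)) = ∅ := by
      rw [Finset.filter_eq_empty_iff]
      intro j _
      rintro ⟨hji, heq⟩
      rcases hb j with h | h
      · rw [h, hi] at heq
        exact (hq0 i).ne heq
      · rw [h, hi] at heq
        have h3 := (hqiff i j).mpr hji
        rw [heq] at h3
        exact lt_irrefl _ h3
    simp only [topKReward]
    rw [h1, h2]
    simp [hi, hq0 i]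
  have hrank_update : ∀ (x : Fin N → ℝ) (i : Fin N) (v : ℝ),
      (univ.filter (fun j => Function.update x i v j ≠ 0 ∧ j < i))
        = (univ.filter (fun j => x j ≠ 0 ∧ j < i)) := by
    intro x i v
    apply Finset.filter_congr
    intro j _
    by_cases h : j = i
    · subst h; simp
    · simp [Function.update_of_ne h]
  have hbin_update : ∀ (x : Fin N → ℝ), (∀ j, x j = 0 ∨ x j = q j) →
      ∀ (i : Fin N) (v : ℝ), (v = 0 ∨ v = q i) →
      ∀ j, Function.update x i v j = 0 ∨ Function.update x i v j = q j := by
    intro x hb i v hv j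
    by_cases h : j = i
    · subst h; simpa using hv
    · rw [Function.update_of_ne h]; exact hb j
  set xs : Fin N → ℝ := fun i => if (i : ℕ) < K then q i else 0 with hxs
  have hbinxs : ∀ j, xs j = 0 ∨ xs j = q j := by
    intro j
    by_cases h : (j : ℕ) < K <;> simp [hxs, h]
  have hrank_xs_lt : ∀ i : Fin N, (i : ℕ) < K →
      (univ.filter (fun j => xs j ≠ 0 ∧ j < i)).card = (i : ℕ) := by
    intro i hi
    have hfe : (univ.filter (fun j => xs j ≠ 0 ∧ j < i))
        = univ.filter (fun j : Fin N => (j : ℕ) < (i : ℕ)) := by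
      apply Finset.filter_congr
      intro j _
      constructor
      · rintro ⟨_, hj⟩
        exact Fin.lt_def.mp hj
      · intro hj
        have hjK : (j : ℕ) < K := lt_trans hj hi
        refine ⟨?_, Fin.lt_def.mpr hj⟩
        simp [hxs, hjK, (hq0 j).ne']
    rw [hfe, card_val_lt _ i.isLt.le]
  constructor
  · -- the given profile is a PNE
    refine ⟨hbinxs, ?_⟩
    intro i y hy
    by_cases hi : (i : ℕ) < K
    · have hxsi : xs i = q i := by simp [hxs, hi]
      have hutil : utilM1 K R c q xs i = R / K - c := by
        rw [utilM1, key xs hbinxs i hxsi, hrank_xs_lt i hi, if_pos hi, hxsi, hcost i]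
      rcases hy with rfl | rfl
      · have hrw : topKReward K R (Function.update xs i 0) i = 0 := by
          simp [topKReward]
        rw [hutil, utilM1, hrw, Function.update_self]
        have : c * 0 / q i = 0 := by simp
        rw [this]
        linarith
      · rw [← hxsi, Function.update_eq_self]
    · have hi' : K ≤ (i : ℕ) := not_lt.mp hi
      have hxsi : xs i = 0 := by simp [hxs, hi]
      have hutil : utilM1 K R c q xs i = 0 := by
        simp [utilM1, topKReward, hxsi]
      rcases hy with rfl | rfl
      · rw [← hxsi, Function.update_eq_self]
      · have hbin' := hbin_update xs hbinxs i (q i) (Or.inr rfl)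
        have hupd : Function.update xs i (q i) i = q i := Function.update_self i (q i) xs
        rw [hutil, utilM1, key _ hbin' i hupd, hrank_update, hupd, hcost i]
        have hKN : K ≤ N := le_trans hi' i.isLt.le
        have hfe : (univ.filter (fun j => xs j ≠ 0 ∧ j < i))
            = univ.filter (fun j : Fin N => (j : ℕ) < K) := by
          apply Finset.filter_congr
          intro j _
          constructor
          · rintro ⟨hj0, _⟩
            by_contra hjK
            exact hj0 (by simp [hxs, hjK])
          · intro hjK
            refine ⟨by simp [hxs, hjK, (hq0 j).ne'], ?_⟩
            exact Fin.lt_def.mpr (lt_of_lt_of_le hjK hi')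
        rw [hfe, card_val_lt K hKN, if_neg (lt_irrefl K)]
        linarith
  · -- uniqueness
    intro x hx
    obtain ⟨hb, hdev⟩ := hx
    set P := univ.filter (fun i : Fin N => x i ≠ 0) with hP
    have hmemP : ∀ i, i ∈ P ↔ x i ≠ 0 := by
      intro i; simp [hP]
    have hPq : ∀ i ∈ P, x i = q i := fun i hi => (hb i).resolve_left ((hmemP i).mp hi)
    have step1 : ∀ i, x i = q i →
        (univ.filter (fun j => x j ≠ 0 ∧ j < i)).card < K := by
      intro i hi
      have h := hdev i 0 (Or.inl rfl)
      have hL : utilM1 K R c q (Function.update x i 0) i = 0 := by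
        simp [utilM1, topKReward]
      rw [hL, utilM1, key x hb i hi, hi, hcost i] at h
      by_contra hcon
      rw [if_neg hcon] at h
      linarith
    have step2 : P.card ≤ K := by
      rcases P.eq_empty_or_nonempty with he | hne
      · rw [he]; simp
      · set i := P.max' hne with hidef
        have hiP : i ∈ P := P.max'_mem hne
        have hxi : x i = q i := hPq i hiP
        have h1 := step1 i hxi
        have hfe : (univ.filter (fun j => x j ≠ 0 ∧ j < i)) = P.erase i := by
          ext j
          simp only [mem_filter, mem_univ, true_and, mem_erase, hmemP]
          constructor
          · rintro ⟨hj0, hji⟩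
            exact ⟨ne_of_lt hji, hj0⟩
          · rintro ⟨hne', hj0⟩
            exact ⟨hj0, lt_of_le_of_ne (P.le_max' j ((hmemP j).mpr hj0)) hne'⟩
        rw [hfe, Finset.card_erase_of_mem hiP] at h1
        omega
    have step3 : ∀ i, x i = 0 → P.card = K ∧ ∀ j ∈ P, j < i := by
      intro i hi
      have h := hdev i (q i) (Or.inr rfl)
      have hR0 : utilM1 K R c q x i = 0 := by
        simp [utilM1, topKReward, hi]
      have hbin' := hbin_update x hb i (q i) (Or.inr rfl)
      have hupd : Function.update x i (q i) i = q i := Function.update_self i (q i) x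
      rw [hR0, utilM1, key _ hbin' i hupd, hrank_update, hupd, hcost i] at h
      have hKle : K ≤ (univ.filter (fun j => x j ≠ 0 ∧ j < i)).card := by
        by_contra hcon
        push_neg at hcon
        rw [if_pos hcon] at h
        have h2 : R / K ≤ c := by linarith
        rw [div_le_iff₀ hKpos] at h2
        nlinarith
      have hsub : (univ.filter (fun j => x j ≠ 0 ∧ j < i)) ⊆ P := by
        intro j hj
        rw [hmemP]
        exact ((mem_filter.mp hj).2).1
      have heq : (univ.filter (fun j => x j ≠ 0 ∧ j < i)) = P :=
        Finset.eq_of_subset_of_card_le hsub (le_trans step2 hKle)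
      rw [heq] at hKle
      refine ⟨le_antisymm step2 hKle, ?_⟩
      intro j hj
      rw [← heq] at hj
      exact (mem_filter.mp hj).2.2
    funext i
    show x i = if (i : ℕ) < K then q i else 0
    by_cases hi : (i : ℕ) < K
    · rw [if_pos hi]
      rcases hb i with h0 | hq'
      · exfalso
        obtain ⟨hcard, hall⟩ := step3 i h0
        have hsub : P ⊆ univ.filter (fun j : Fin N => (j : ℕ) < (i : ℕ)) := by
          intro j hj
          simp only [mem_filter, mem_univ, true_and]
          exact Fin.lt_def.mp (hall j hj)
        have hle := Finset.card_le_card hsub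
        rw [hcard, card_val_lt _ i.isLt.le] at hle
        omega
      · exact hq'
    · rw [if_neg hi]
      have hi' : K ≤ (i : ℕ) := not_lt.mp hi
      rcases hb i with h0 | hq'
      · exact h0
      · exfalso
        have hiP : i ∈ P := (hmemP i).mpr (by rw [hq']; exact (hq0 i).ne')
        have hKN : K < N := lt_of_le_of_lt hi' i.isLt
        by_cases hall : ∀ j : Fin N, (j : ℕ) < K → x j ≠ 0
        · have hsub : insert i (univ.filter (fun j : Fin N => (j : ℕ) < K)) ⊆ P := by
            intro j hj
            rcases Finset.mem_insert.mp hj with rfl | hj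
            · exact hiP
            · rw [hmemP]
              exact hall j (Finset.mem_filter.mp hj).2
          have hcard : (insert i (univ.filter (fun j : Fin N => (j : ℕ) < K))).card
              = K + 1 := by
            rw [Finset.card_insert_of_notMem (by simp [hi]), card_val_lt K hKN.le]
          have hle := Finset.card_le_card hsub
          rw [hcard] at hle
          omega
        · push_neg at hall
          obtain ⟨j0, hj0K, hj00⟩ := hall
          obtain ⟨_, hall'⟩ := step3 j0 hj00
          have h1 : i < j0 := hall' i hiP
          have h2 : j0 < i := Fin.lt_def.mpr (lt_of_lt_of_le hj0K hi')
          exact absurd h1 (not_lt.mpr h2.le)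
end

section
/- Consider mechanism M2 (full information, top-K allocation, continuous action space) with N ≥ 1 users, reward R > 0, K ≥ 1, cost parameter c > 0, and types q_i ∈ (0,1]. Then the game has no pure Nash equilibrium: for every action profile (x_1, …, x_N) with x_i ∈ [0, q_i] for all i, there exists a user who can strictly increase her utility by unilaterally changing her own action within [0, q_i]. -/
open Finset

/-- Utility in mechanism M2: top-K reward minus linear cost `c * x i / q i`. -/
noncomputable def utilM2 {N : ℕ} (K : ℕ) (R c : ℝ) (q x : Fin N → ℝ) (i : Fin N) : ℝ :=
  topKReward K R x i - c * x i / q i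

/-!
If nobody contributes, any user gains by contributing a little: she is then ranked first and
gets `R / K` at an arbitrarily small cost. Otherwise consider the contributing user ranked
lowest (smallest contribution, largest index among ties). Every other contribution is either `0`
or at least hers, so halving her contribution leaves the set of users ranked above her unchanged;
she keeps her reward and pays less.
-/

section rankedAbove

variable {N : ℕ}

noncomputable def rankedAbove (x : Fin N → ℝ) (i : Fin N) : Finset (Fin N) :=
  univ.filter fun j => x i < x j ∨ (j < i ∧ x j = x i)

theorem topKReward_eq_ite (K : ℕ) (R : ℝ) (x : Fin N → ℝ) (i : Fin N) :
    topKReward K R x i = if 0 < x i ∧ #(rankedAbove x i) < K then R / K else 0 := by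
  have hdisj : Disjoint (univ.filter fun j => x i < x j)
      (univ.filter fun j => j < i ∧ x j = x i) :=
    disjoint_filter.mpr fun j _ hlt ⟨_, heq⟩ => hlt.ne' heq
  rw [topKReward, rankedAbove, filter_or, card_union_of_disjoint hdisj]

theorem rankedAbove_update_eq {x : Fin N → ℝ} {i : Fin N} {y : ℝ} (hy : 0 < y)
    (hgap : ∀ j ≠ i, 0 < x j → y < x j) :
    rankedAbove (Function.update x i y) i = univ.filter fun j => j ≠ i ∧ 0 < x j := by
  ext j
  rcases eq_or_ne j i with rfl | hji
  · simp [rankedAbove]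
  · have hne : x j ≠ y := fun h => (hgap j hji (h ▸ hy)).ne' h
    have hlt : y < x j ↔ 0 < x j := ⟨hy.trans, hgap j hji⟩
    simp [rankedAbove, hji, hne, hlt]

theorem rankedAbove_eq_of_lowest {x : Fin N → ℝ} {i : Fin N} (hi : 0 < x i)
    (hlow : ∀ j ≠ i, 0 < x j → x i < x j ∨ (j < i ∧ x j = x i)) :
    rankedAbove x i = univ.filter fun j => j ≠ i ∧ 0 < x j := by
  ext j
  rcases eq_or_ne j i with rfl | hji
  · simp [rankedAbove]
  · have hpos : x i < x j ∨ (j < i ∧ x j = x i) → 0 < x j := by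
      rintro (h | ⟨-, h⟩) <;> linarith
    simpa [rankedAbove, hji] using ⟨hpos, hlow j hji⟩

theorem exists_lowest_ranked (x : Fin N → ℝ) {p : Fin N → Prop} (hp : ∃ i, p i) :
    ∃ i, p i ∧ ∀ j ≠ i, p j → x i < x j ∨ (j < i ∧ x j = x i) := by
  classical
  obtain ⟨i, hi, hmax⟩ := (univ.filter p).exists_max_image (fun j => toLex (-x j, j))
    (by simpa [Finset.Nonempty] using hp)
  refine ⟨i, (mem_filter.mp hi).2, fun j hji hj => ?_⟩
  rcases Prod.Lex.le_iff.mp (hmax j (mem_filter.mpr ⟨mem_univ j, hj⟩)) with h | ⟨h, hle⟩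
  · exact Or.inl (neg_lt_neg_iff.mp h)
  · exact Or.inr ⟨lt_of_le_of_ne hle hji, neg_inj.mp h⟩

end rankedAbove

theorem exists_mem_Ioc_mul_div_lt {a c q : ℝ} (ha : 0 < a) (hc : 0 < c) (hq : 0 < q) :
    ∃ y ∈ Set.Ioc 0 q, c * y / q < a := by
  refine ⟨min q (a * q / (2 * c)), ⟨by positivity, min_le_left _ _⟩, ?_⟩
  calc c * min q (a * q / (2 * c)) / q ≤ c * (a * q / (2 * c)) / q := by
        gcongr; exact min_le_right _ _
    _ = a / 2 := by field_simp
    _ < a := half_lt_self ha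

theorem stmt_2_general (N K : ℕ) (hN : 1 ≤ N) (hK : 1 ≤ K) (R c : ℝ) (hR : 0 < R) (hc : 0 < c)
    (q : Fin N → ℝ) (hq0 : ∀ i, 0 < q i) :
    ∀ x : Fin N → ℝ, (∀ i, x i ∈ Set.Icc 0 (q i)) →
      ∃ i : Fin N, ∃ y ∈ Set.Icc 0 (q i),
        utilM2 K R c q x i < utilM2 K R c q (Function.update x i y) i := by
  intro x hx
  by_cases hzero : ∀ i, x i = 0
  · set i : Fin N := ⟨0, hN⟩
    obtain ⟨y, hy, hcost⟩ :=
      exists_mem_Ioc_mul_div_lt (div_pos hR (Nat.cast_pos.mpr hK)) hc (hq0 i)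
    refine ⟨i, y, Set.Ioc_subset_Icc_self hy, ?_⟩
    have hranked := rankedAbove_update_eq (x := x) (i := i) hy.1 (by simp [hzero])
    simp only [utilM2, topKReward_eq_ite, hranked, hzero, Function.update_self]
    simpa [hy.1, show 0 < K from hK] using hcost
  · obtain ⟨i, hi, hlow⟩ := exists_lowest_ranked x (p := fun j => 0 < x j) (by
      push Not at hzero
      exact hzero.imp fun j hj => (hx j).1.lt_of_ne' hj)
    have hgap : ∀ j ≠ i, 0 < x j → x i / 2 < x j := fun j hji hj => by
      rcases hlow j hji hj with h | ⟨-, h⟩ <;> linarith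
    have hreward : topKReward K R (Function.update x i (x i / 2)) i = topKReward K R x i := by
      rw [topKReward_eq_ite, topKReward_eq_ite, rankedAbove_update_eq (half_pos hi) hgap,
        rankedAbove_eq_of_lowest hi hlow, Function.update_self]
      simp [hi]
    refine ⟨i, x i / 2, ⟨by positivity, by linarith [(hx i).2]⟩, ?_⟩
    rw [utilM2, utilM2, hreward, Function.update_self]
    have hcost : c * (x i / 2) / q i < c * x i / q i := by
      gcongr
      · exact hq0 i
      · exact half_lt_self hi
    linarith

theorem stmt_2 (N K : ℕ) (hN : 1 ≤ N) (hK : 1 ≤ K) (R c : ℝ) (hR : 0 < R) (hc : 0 < c)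
    (q : Fin N → ℝ) (hq1 : ∀ i, q i ≤ 1) (hq0 : ∀ i, 0 < q i) :
    ∀ x : Fin N → ℝ, (∀ i, x i ∈ Set.Icc 0 (q i)) →
      ∃ i : Fin N, ∃ y ∈ Set.Icc 0 (q i),
        utilM2 K R c q x i < utilM2 K R c q (Function.update x i y) i :=
  stmt_2_general N K hN hK R c hR hc q hq0
end

section
/- Consider mechanism M3 (full information, proportional allocation, binary action space) with N users, reward R > c > 0, and types sorted nonincreasingly: 1 ≥ q_1 ≥ q_2 ≥ … ≥ q_N > 0. Suppose the index j (1 ≤ j ≤ N) satisfies R·q_j/(Σ_{k=1}^{j} q_k) > c and, in case j < N, also R·q_{j+1}/(Σ_{k=1}^{j+1} q_k) ≤ c. Then the profile with x_i = q_i for all 1 ≤ i ≤ j and x_i = 0 for all i > j is a pure Nash equilibrium. -/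
open Finset

/-- Proportional allocation reward: user `i` gets `R * x i / (∑ j, x j)` if she
contributes positively, and `0` otherwise. -/
noncomputable def propReward {N : ℕ} (R : ℝ) (x : Fin N → ℝ) (i : Fin N) : ℝ :=
  if 0 < x i then R * x i / (∑ j, x j) else 0

/-- Utility in mechanism M3: proportional reward minus linear cost. -/
noncomputable def utilM3 {N : ℕ} (R c : ℝ) (q x : Fin N → ℝ) (i : Fin N) : ℝ :=
  propReward R x i - c * x i / q i

/-- Pure Nash equilibrium of mechanism M3 (binary action space `{0, q i}`):
every action is binary-feasible and no user can strictly increase her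
utility by unilaterally switching her own action. -/
noncomputable def isPNE_M3 {N : ℕ} (R c : ℝ) (q : Fin N → ℝ) (x : Fin N → ℝ) : Prop :=
  (∀ i, x i = 0 ∨ x i = q i) ∧
  ∀ i, ∀ y : ℝ, (y = 0 ∨ y = q i) →
    utilM3 R c q (Function.update x i y) i ≤ utilM3 R c q x i

/-!
A binary profile is an equilibrium as soon as every participant's share `R q_i / Σ x` covers
her cost `c` and no outsider's share `R q_i / (q_i + Σ x)` after joining would exceed it.
For `R > 0` (forced by `c > 0` and the hypothesis on `j`) both shares increase with `q_i`, so
with sorted types it suffices to check the weakest participant `j` and the strongest outsider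
`j + 1`, which is exactly what the hypotheses say.
-/

lemma sum_update_of_eq_zero {ι : Type*} [Fintype ι] [DecidableEq ι] {x : ι → ℝ} {i : ι}
    (hi : x i = 0) (y : ℝ) : ∑ k, Function.update x i y k = y + ∑ k, x k := by
  rw [sum_update_of_mem (mem_univ i), sum_eq_add_sum_sdiff_singleton_of_mem (mem_univ i) x, hi,
    zero_add]

section Utility

variable {N : ℕ} {R c : ℝ} {q x : Fin N → ℝ} {i : Fin N}

lemma utilM3_of_eq_zero (hi : x i = 0) : utilM3 R c q x i = 0 := by
  simp [utilM3, propReward, hi]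

lemma utilM3_of_eq_type (hq : 0 < q i) (hi : x i = q i) :
    utilM3 R c q x i = R * q i / ∑ k, x k - c := by
  rw [utilM3, propReward, hi, if_pos hq, mul_div_assoc c, div_self hq.ne', mul_one]

end Utility

theorem isPNE_M3_of_participation {N : ℕ} {R c : ℝ} {q x : Fin N → ℝ}
    (hq : ∀ i, 0 < q i) (hx : ∀ i, x i = 0 ∨ x i = q i)
    (hin : ∀ i, x i = q i → c ≤ R * q i / ∑ k, x k)
    (hout : ∀ i, x i = 0 → R * q i / (q i + ∑ k, x k) ≤ c) :
    isPNE_M3 R c q x := by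
  refine ⟨hx, fun i y hy => ?_⟩
  rcases hx i with hi | hi <;> rcases hy with rfl | rfl
  · rw [← hi, Function.update_eq_self]
  · rw [utilM3_of_eq_zero hi, utilM3_of_eq_type (hq i) (Function.update_self ..),
      sum_update_of_eq_zero hi]
    linarith [hout i hi]
  · rw [utilM3_of_eq_zero (Function.update_self ..), utilM3_of_eq_type (hq i) hi]
    linarith [hin i hi]
  · rw [← hi, Function.update_eq_self]

lemma div_add_le_div_add_of_le {R S a b : ℝ} (hR : 0 ≤ R) (hS : 0 ≤ S) (ha : 0 < a)
    (hab : a ≤ b) : R * a / (a + S) ≤ R * b / (b + S) := by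
  rw [div_le_div_iff₀ (by positivity) (by linarith)]
  nlinarith [mul_le_mul_of_nonneg_left hab (mul_nonneg hR hS)]

theorem stmt_4_general (N : ℕ) (R c : ℝ) (hc : 0 < c)
    (q : Fin N → ℝ) (hq0 : ∀ i, 0 < q i)
    (hsort : ∀ i j : Fin N, i ≤ j → q j ≤ q i)
    (j : Fin N)
    (hj : c < R * q j / (∑ k ∈ univ.filter (· ≤ j), q k))
    (hj1 : ∀ h : (j : ℕ) + 1 < N,
      R * q ⟨(j : ℕ) + 1, h⟩ /
        ((∑ k ∈ univ.filter (· ≤ j), q k) + q ⟨(j : ℕ) + 1, h⟩) ≤ c) :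
    isPNE_M3 R c q (fun i : Fin N => if i ≤ j then q i else 0) := by
  set S := ∑ k ∈ univ.filter (· ≤ j), q k
  have hS : 0 < S := sum_pos (fun k _ => hq0 k) ⟨j, by simp⟩
  have hsum : ∑ k, (if k ≤ j then q k else 0) = S := (sum_filter _ _).symm
  have hR : 0 < R :=
    pos_of_mul_pos_left ((div_pos_iff_of_pos_right hS).mp (hc.trans hj)) (hq0 j).le
  refine isPNE_M3_of_participation hq0 (fun i => by split_ifs <;> simp) (fun i hi => ?_)
    (fun i hi => ?_) <;> rw [hsum]
  · have hij : i ≤ j := by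
      by_contra hij
      simp only [hij, if_false] at hi
      exact (hq0 i).ne' hi.symm
    exact hj.le.trans (by gcongr; exact hsort i j hij)
  · have hji : j < i := by
      by_contra! hij
      simp only [hij, if_true] at hi
      exact (hq0 i).ne' hi
    have hsucc : (j : ℕ) + 1 < N := lt_of_le_of_lt hji i.isLt
    calc R * q i / (q i + S)
        ≤ R * q ⟨j + 1, hsucc⟩ / (q ⟨j + 1, hsucc⟩ + S) :=
          div_add_le_div_add_of_le hR.le hS.le (hq0 i) (hsort _ i (Fin.mk_le_of_le_val hji))
      _ ≤ c := add_comm S (q ⟨j + 1, hsucc⟩) ▸ hj1 hsucc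

theorem stmt_4 (N : ℕ) (R c : ℝ) (hc : 0 < c) (hRc : c < R)
    (q : Fin N → ℝ) (hq1 : ∀ i, q i ≤ 1) (hq0 : ∀ i, 0 < q i)
    (hsort : ∀ i j : Fin N, i ≤ j → q j ≤ q i)
    (j : Fin N)
    (hj : c < R * q j / (∑ k ∈ univ.filter (· ≤ j), q k))
    (hj1 : ∀ h : (j : ℕ) + 1 < N,
      R * q ⟨(j : ℕ) + 1, h⟩ /
        ((∑ k ∈ univ.filter (· ≤ j), q k) + q ⟨(j : ℕ) + 1, h⟩) ≤ c) :
    isPNE_M3 R c q (fun i : Fin N => if i ≤ j then q i else 0) :=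
  stmt_4_general N R c hc q hq0 hsort j hj hj1
end

section
/- Consider mechanism M4 (full information, proportional allocation, continuous action space) with N ≥ 2 users, reward R > 0, cost parameter c > 0, and types q_i ∈ (0,1]. Then there exists a pure Nash equilibrium: a profile x with x_i ∈ [0, q_i] for all i such that for every user i and every alternative action y ∈ [0, q_i], replacing x_i by y does not strictly increase user i's utility. -/
open Finset

/-- Utility in mechanism M4 (proportional allocation, continuous action space):
`u_i(x) = R * x i / (∑ j, x j) - c * x i / q i` if `∑ j, x j > 0`, and `0`
if all contributions are zero. -/
noncomputable def utilM4 {N : ℕ} (R c : ℝ) (q x : Fin N → ℝ) (i : Fin N) : ℝ :=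
  if 0 < ∑ j, x j then R * x i / (∑ j, x j) - c * x i / q i else 0

/-- Pure Nash equilibrium of mechanism M4: every action lies in `[0, q i]` and
no user can strictly increase her utility by unilaterally changing her own
action within `[0, q i]`. -/
noncomputable def isPNE_M4 {N : ℕ} (R c : ℝ) (q : Fin N → ℝ) (x : Fin N → ℝ) : Prop :=
  (∀ i, x i ∈ Set.Icc 0 (q i)) ∧
  ∀ i, ∀ y ∈ Set.Icc 0 (q i),
    utilM4 R c q (Function.update x i y) i ≤ utilM4 R c q x i

/-!
Write `a = c / q i` and `s > 0` for the total of the other users. The payoff difference factors as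
`(R x/(x+s) - a x) - (R y/(y+s) - a y) = (x - y)(R s - a (x+s)(y+s)) / ((x+s)(y+s))`,
so `x` is a best response on `[0, q i]` under the KKT conditions: `a (x+s)² ≤ R s` if `x > 0`
and `R s ≤ a (x+s)²` if `x < q i`. In terms of the total `S = x + s` these hold for the clipped
value `min (q i) (max 0 (S - a S² / R))`, so an equilibrium is a positive fixed point of
`S ↦ ∑ i, share i S`. This map is continuous and bounded by `∑ i, q i`, and for small `S > 0`
every share is at least `S / 2`, so with `N ≥ 2` users it starts above the diagonal; the
intermediate value theorem gives the fixed point.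
-/

open Filter Topology

section ProportionalPayoff

variable {R a s x y : ℝ}

lemma proportional_payoff_sub (hx : 0 < x + s) (hy : 0 < y + s) :
    (R * x / (x + s) - a * x) - (R * y / (y + s) - a * y) =
      (x - y) * (R * s - a * (x + s) * (y + s)) / ((x + s) * (y + s)) := by
  field_simp
  ring

theorem proportional_payoff_le_of_kkt {q : ℝ} (ha : 0 ≤ a) (hs : 0 < s) (hx : 0 ≤ x)
    (hy : y ∈ Set.Icc 0 q) (hpos : 0 < x → a * (x + s) ^ 2 ≤ R * s)
    (hcap : x < q → R * s ≤ a * (x + s) ^ 2) :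
    R * y / (y + s) - a * y ≤ R * x / (x + s) - a * x := by
  have hxs : 0 < x + s := by linarith
  have hys : 0 < y + s := by linarith [hy.1]
  rw [← sub_nonneg, proportional_payoff_sub hxs hys]
  refine div_nonneg ?_ (by positivity)
  rcases lt_trichotomy y x with hyx | rfl | hxy
  · have hfoc := hpos (hy.1.trans_lt hyx)
    have hmono : a * (x + s) * (y + s) ≤ a * (x + s) ^ 2 := by
      rw [sq, ← mul_assoc]; gcongr
    exact mul_nonneg (by linarith) (by linarith)
  · simp
  · have hfoc := hcap (hxy.trans_le hy.2)
    have hmono : a * (x + s) ^ 2 ≤ a * (x + s) * (y + s) := by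
      rw [sq, ← mul_assoc]; gcongr
    exact mul_nonneg_of_nonpos_of_nonpos (by linarith) (by linarith)

end ProportionalPayoff

theorem exists_le_fixedPoint_of_le_of_bdd {φ : ℝ → ℝ} (hφ : Continuous φ) {B S₀ : ℝ}
    (hB : ∀ S, φ S ≤ B) (h₀ : S₀ ≤ φ S₀) : ∃ S, S₀ ≤ S ∧ φ S = S := by
  have hle : S₀ ≤ max S₀ B := le_max_left _ _
  have hcont : ContinuousOn (fun S => φ S - S) (Set.Icc S₀ (max S₀ B)) := by fun_prop
  have hzero : (0 : ℝ) ∈ Set.Icc (φ (max S₀ B) - max S₀ B) (φ S₀ - S₀) :=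
    ⟨by linarith [hB (max S₀ B), le_max_right S₀ B], by linarith⟩
  obtain ⟨S, hS, hfix⟩ := intermediate_value_Icc' hle hcont hzero
  exact ⟨S, hS.1, sub_eq_zero.1 hfix⟩

noncomputable def share (R a q S : ℝ) : ℝ := min q (max 0 (S - a * S ^ 2 / R))

section Share

variable {R a q S : ℝ}

@[fun_prop]
theorem continuous_share : Continuous (share R a q) := by
  unfold share; fun_prop

theorem share_nonneg (hq : 0 ≤ q) : 0 ≤ share R a q S :=
  le_min hq (le_max_left _ _)

theorem share_le (R a q S : ℝ) : share R a q S ≤ q := min_le_left _ _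

theorem share_lt_self (hR : 0 < R) (ha : 0 < a) (hS : 0 < S) : share R a q S < S := by
  have : 0 < a * S ^ 2 / R := by positivity
  exact (min_le_right _ _).trans_lt (max_lt hS (by linarith))

theorem half_le_share (hR : 0 < R) (hS : 0 ≤ S) (hSq : S ≤ q) (haS : a * S ≤ R / 2) :
    S / 2 ≤ share R a q S := by
  have : a * S ^ 2 / R ≤ S / 2 := by
    rw [div_le_iff₀ hR]; nlinarith
  exact le_min (by linarith) (le_max_of_le_right (by linarith))

theorem mul_sq_le_of_share_pos (hR : 0 < R) (h : 0 < share R a q S) :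
    a * S ^ 2 ≤ R * (S - share R a q S) := by
  have hle : share R a q S ≤ S - a * S ^ 2 / R :=
    (le_max_iff.1 (min_le_right _ _)).resolve_left h.not_ge
  have : R * (a * S ^ 2 / R) = a * S ^ 2 := mul_div_cancel₀ _ hR.ne'
  nlinarith

theorem le_mul_sq_of_share_lt (hR : 0 < R) (h : share R a q S < q) :
    R * (S - share R a q S) ≤ a * S ^ 2 := by
  have hge : S - a * S ^ 2 / R ≤ share R a q S := by
    rw [share, min_eq_right (min_lt_iff.1 h |>.resolve_left (lt_irrefl q)).le]
    exact le_max_right _ _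
  have : R * (a * S ^ 2 / R) = a * S ^ 2 := mul_div_cancel₀ _ hR.ne'
  nlinarith

end Share

theorem exists_pos_sum_share_eq_self {N : ℕ} (hN : 2 ≤ N) {R : ℝ} (hR : 0 < R)
    (a q : Fin N → ℝ) (hq : ∀ i, 0 < q i) :
    ∃ S, 0 < S ∧ ∑ i, share R (a i) (q i) S = S := by
  have hsmall : ∀ᶠ S in 𝓝[>] 0, 0 < S ∧ ∀ i, S ≤ q i ∧ a i * S ≤ R / 2 := by
    refine eventually_mem_nhdsWithin.and (nhdsWithin_le_nhds (eventually_all.2 fun i => ?_))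
    have hlin : Tendsto (fun S => a i * S) (𝓝 0) (𝓝 0) :=
      (continuous_const_mul (a i)).tendsto' 0 0 (mul_zero _)
    exact (eventually_le_nhds (hq i)).and (hlin.eventually (eventually_le_nhds (half_pos hR)))
  obtain ⟨S₀, hS₀, hS₀small⟩ := hsmall.exists
  have hstart : S₀ ≤ ∑ i, share R (a i) (q i) S₀ := by
    calc S₀ ≤ N • (S₀ / 2) := by
          rw [nsmul_eq_mul]
          nlinarith [show (2 : ℝ) ≤ N by exact_mod_cast hN]
      _ ≤ ∑ i, share R (a i) (q i) S₀ := by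
          simpa using card_nsmul_le_sum univ _ _ fun i _ =>
            half_le_share hR hS₀.le (hS₀small i).1 (hS₀small i).2
  obtain ⟨S, hS, hfix⟩ := exists_le_fixedPoint_of_le_of_bdd (by fun_prop)
    (fun S => sum_le_sum fun i _ => share_le R (a i) (q i) S) hstart
  exact ⟨S, hS₀.trans_le hS, hfix⟩

theorem utilM4_update_eq {N : ℕ} (R c : ℝ) (q x : Fin N → ℝ) (i : Fin N) {y : ℝ}
    (hpos : 0 < y + (∑ j, x j - x i)) :
    utilM4 R c q (Function.update x i y) i =
      R * y / (y + (∑ j, x j - x i)) - c / q i * y := by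
  have hsum : ∑ j, Function.update x i y j = y + (∑ j, x j - x i) := by
    rw [sum_update_of_mem (mem_univ i), sdiff_singleton_eq_erase, sum_erase_eq_sub (mem_univ i)]
  rw [utilM4, hsum, if_pos hpos, Function.update_self, mul_div_right_comm c]

theorem stmt_5_general (N : ℕ) (hN : 2 ≤ N) (R c : ℝ) (hR : 0 < R) (hc : 0 < c)
    (q : Fin N → ℝ) (hq0 : ∀ i, 0 < q i) :
    ∃ x : Fin N → ℝ, isPNE_M4 R c q x := by
  set a : Fin N → ℝ := fun i => c / q i
  obtain ⟨S, hS, hfix⟩ := exists_pos_sum_share_eq_self hN hR a q hq0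
  set x : Fin N → ℝ := fun i => share R (a i) (q i) S
  have hx : ∀ i, x i ∈ Set.Icc 0 (q i) := fun i => ⟨share_nonneg (hq0 i).le, share_le ..⟩
  refine ⟨x, hx, fun i y hy => ?_⟩
  have ha : 0 < a i := div_pos hc (hq0 i)
  have hs : 0 < S - x i := sub_pos.2 (share_lt_self hR ha hS)
  have hxS : x i + (S - x i) = S := add_sub_cancel _ _
  have hfix' : ∑ j, x j = S := hfix
  conv_rhs => rw [← Function.update_eq_self i x]
  rw [utilM4_update_eq, utilM4_update_eq, hfix']
  · refine proportional_payoff_le_of_kkt ha.le hs (hx i).1 hy (fun h => ?_) (fun h => ?_)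
    · rw [hxS]; exact mul_sq_le_of_share_pos hR h
    · rw [hxS]; exact le_mul_sq_of_share_lt hR h
  all_goals rw [hfix']; linarith [(hx i).1, hy.1]

theorem stmt_5 (N : ℕ) (hN : 2 ≤ N) (R c : ℝ) (hR : 0 < R) (hc : 0 < c)
    (q : Fin N → ℝ) (hq1 : ∀ i, q i ≤ 1) (hq0 : ∀ i, 0 < q i) :
    ∃ x : Fin N → ℝ, isPNE_M4 R c q x :=
  stmt_5_general N hN R c hR hc q hq0
end

section
/- Consider mechanism M4 (full information, proportional allocation, continuous action space) with N ≥ 2 users, reward R > 0, cost parameter c > 0, and types q_k ∈ (0,1]. Let x be a pure Nash equilibrium and let i, j be two users with q_i ≤ q_j. If x_i = q_i, then x_j = q_j. -/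
open Finset

set_option maxHeartbeats 1000000 in
theorem stmt_6 (N : ℕ) (hN : 2 ≤ N) (R c : ℝ) (hR : 0 < R) (hc : 0 < c)
    (q : Fin N → ℝ) (hq1 : ∀ k, q k ≤ 1) (hq0 : ∀ k, 0 < q k)
    (x : Fin N → ℝ) (hx : isPNE_M4 R c q x)
    (i j : Fin N) (hij : q i ≤ q j) (hxi : x i = q i) :
    x j = q j := by
  rcases hx with ⟨hbox, hne⟩
  rcases eq_or_ne i j with rfl | hij'
  · exact hxi
  have hxnn : ∀ k, 0 ≤ x k := fun k => (hbox k).1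
  have hxle : ∀ k, x k ≤ q k := fun k => (hbox k).2
  obtain ⟨S, hSdef⟩ : ∃ s : ℝ, s = ∑ k, x k := ⟨_, rfl⟩
  obtain ⟨A, hAdef⟩ : ∃ a : Fin N → ℝ, a = fun k => ∑ l ∈ Finset.univ.erase k, x l :=
    ⟨_, rfl⟩
  have hSi : x i ≤ S := by
    rw [hSdef]
    exact Finset.single_le_sum (fun k _ => hxnn k) (Finset.mem_univ i)
  have hS : 0 < S := lt_of_lt_of_le (hxi ▸ hq0 i) hSi
  have hAx : ∀ k, x k + A k = S := by
    intro k
    rw [hSdef, hAdef]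
    exact Finset.add_sum_erase _ _ (Finset.mem_univ k)
  have hAnn : ∀ k, 0 ≤ A k := by
    intro k
    rw [hAdef]
    exact Finset.sum_nonneg fun l _ => hxnn l
  have hdev : ∀ k y, 0 ≤ y → y ≤ q k → 0 < y + A k →
      R * y / (y + A k) - c * y / q k ≤ R * x k / S - c * x k / q k := by
    intro k y hy0 hyq hpos
    have h := hne k y ⟨hy0, hyq⟩
    have hsum : ∑ l, Function.update x k y l = y + A k := by
      rw [Finset.sum_update_of_mem (Finset.mem_univ k), hAdef]
      simp [Finset.erase_eq]
    unfold utilM4 at h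
    rw [hsum, if_pos hpos, Function.update_self, ← hSdef, if_pos hS] at h
    exact h
  -- main contradiction argument
  by_contra hnej
  have hxjlt : x j < q j := lt_of_le_of_ne (hxle j) hnej
  -- Condition A: player i at the upper bound cannot gain by decreasing
  have condA : c * S ^ 2 ≤ R * q i * A i := by
    by_contra hlt
    push_neg at hlt
    have hAi : 0 ≤ A i := hAnn i
    have hSeq : q i + A i = S := by rw [← hxi]; exact hAx i
    have hqi := hq0 i
    obtain ⟨δ, hδ⟩ : ∃ d : ℝ, d = S - R * A i * q i / (c * S) := ⟨_, rfl⟩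
    have hδpos : 0 < δ := by
      rw [hδ, sub_pos, div_lt_iff₀ (by positivity)]
      nlinarith
    obtain ⟨y, hy⟩ : ∃ y : ℝ, y = max (q i - δ / 2) (q i / 2) := ⟨_, rfl⟩
    have hy0 : 0 < y := by rw [hy]; exact lt_of_lt_of_le (by positivity) (le_max_right _ _)
    have hylt : y < q i := by rw [hy]; exact max_lt (by linarith) (by linarith)
    have hAy : 0 < y + A i := by linarith
    have hkey : R * A i * q i < c * (y + A i) * S := by
      have h1 : q i - δ / 2 ≤ y := by rw [hy]; exact le_max_left _ _
      have h2 : S - δ / 2 ≤ y + A i := by linarith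
      have h3 : R * A i * q i = c * (S - δ) * S := by
        rw [hδ]; field_simp; ring
      nlinarith [mul_le_mul_of_nonneg_left h2 (le_of_lt (mul_pos hc hS)),
        mul_pos (mul_pos hc hδpos) hS]
    have hd := hdev i y hy0.le hylt.le hAy
    rw [hxi] at hd
    rw [div_sub_div _ _ hAy.ne' hqi.ne', div_sub_div _ _ hS.ne' hqi.ne',
      div_le_div_iff₀ (by positivity) (by positivity)] at hd
    rw [show S = q i + A i from hSeq.symm] at hd hkey
    nlinarith [mul_pos hqi (mul_pos (sub_pos.2 hylt) (sub_pos.2 hkey))]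
  -- Condition B: player j strictly below the bound cannot gain by increasing
  have condB : R * q j * A j ≤ c * S ^ 2 := by
    by_contra hlt
    push_neg at hlt
    have hAj : 0 ≤ A j := hAnn j
    have hSeq : x j + A j = S := hAx j
    have hqj := hq0 j
    obtain ⟨δ, hδ⟩ : ∃ d : ℝ, d = R * A j * q j / (c * S) - S := ⟨_, rfl⟩
    have hδpos : 0 < δ := by
      rw [hδ, sub_pos, lt_div_iff₀ (by positivity)]
      nlinarith
    obtain ⟨y, hy⟩ : ∃ y : ℝ, y = min (q j) (x j + δ / 2) := ⟨_, rfl⟩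
    have hyx : x j < y := by rw [hy]; exact lt_min hxjlt (by linarith)
    have hy0 : 0 ≤ y := le_of_lt (lt_of_le_of_lt (hxnn j) hyx)
    have hyq : y ≤ q j := by rw [hy]; exact min_le_left _ _
    have hAy : 0 < y + A j := by linarith [hxnn j]
    have hkey : c * (y + A j) * S < R * A j * q j := by
      have h1 : y ≤ x j + δ / 2 := by rw [hy]; exact min_le_right _ _
      have h2 : y + A j ≤ S + δ / 2 := by linarith
      have h3 : R * A j * q j = c * (S + δ) * S := by
        rw [hδ]; field_simp; ring
      nlinarith [mul_le_mul_of_nonneg_left h2 (le_of_lt (mul_pos hc hS)),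
        mul_pos (mul_pos hc hδpos) hS]
    have hd := hdev j y hy0 hyq hAy
    rw [div_sub_div _ _ hAy.ne' hqj.ne', div_sub_div _ _ hS.ne' hqj.ne',
      div_le_div_iff₀ (by positivity) (by positivity)] at hd
    rw [show S = x j + A j from hSeq.symm] at hd hkey
    nlinarith [mul_pos hqj (mul_pos (sub_pos.2 hyx) (sub_pos.2 hkey))]
  -- S ≥ q i + x j since i ≠ j
  have hAij : q i ≤ A j := by
    rw [← hxi, hAdef]
    exact Finset.single_le_sum (fun l _ => hxnn l)
      (Finset.mem_erase.mpr ⟨hij', Finset.mem_univ i⟩)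
  have hSAi : A i = S - x i := by linarith [hAx i]
  have hSAj : A j = S - x j := by linarith [hAx j]
  have hSge : q i + x j ≤ S := by linarith [hAx j]
  rw [hSAi, hxi] at condA
  rw [hSAj] at condB
  have h4 : q j * (S - x j) ≤ q i * (S - q i) :=
    le_of_mul_le_mul_left (by nlinarith) hR
  nlinarith [mul_nonneg (sub_nonneg.2 hij) (sub_nonneg.2 hSge),
    mul_pos (hq0 i) (sub_pos.2 hxjlt)]
end

section
/- Consider mechanism M4 (full information, proportional allocation, continuous action space) with N users, reward R > 0, cost parameter c > 0, and types sorted nonincreasingly: 1 ≥ q_1 ≥ q_2 ≥ … ≥ q_N > 0. Fix m with 1 ≤ m < N, and let the induced local game be mechanism M4 restricted to users 1, …, m (with the same R and c). If (x_1, …, x_m) is a pure Nash equilibrium of the induced local game and Σ_{i=1}^{m} x_i ≥ R·q_{m+1}/c, then the profile (y_1, …, y_N) with y_i = x_i for 1 ≤ i ≤ m and y_i = 0 for m+1 ≤ i ≤ N is a pure Nash equilibrium of the original N-user game. -/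
open Finset

lemma sum_ext_aux {N m : ℕ} (hmN : m < N) (x : Fin m → ℝ) :
    ∑ j : Fin N, (if h : (j : ℕ) < m then x ⟨(j : ℕ), h⟩ else 0) = ∑ i, x i := by
  have h1 : ∑ j : Fin N, (if h : (j : ℕ) < m then x ⟨(j : ℕ), h⟩ else 0)
      = ∑ k ∈ Finset.range N, (if h : k < m then x ⟨k, h⟩ else 0) :=
    Fin.sum_univ_eq_sum_range (fun k => if h : k < m then x ⟨k, h⟩ else 0) N
  have h2 : ∑ k ∈ Finset.range m, (if h : k < m then x ⟨k, h⟩ else 0)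
      = ∑ k ∈ Finset.range N, (if h : k < m then x ⟨k, h⟩ else 0) := by
    apply Finset.sum_subset (Finset.range_subset_range.2 hmN.le)
    intro k _ hk
    rw [Finset.mem_range] at hk
    exact dif_neg hk
  have h3 : ∑ i : Fin m, x i
      = ∑ k ∈ Finset.range m, (if h : k < m then x ⟨k, h⟩ else 0) := by
    rw [← Fin.sum_univ_eq_sum_range (fun k => if h : k < m then x ⟨k, h⟩ else 0) m]
    exact Finset.sum_congr rfl (fun i _ => by simp [i.isLt])
  rw [h1, ← h2, ← h3]

lemma util_ext_aux {N m : ℕ} (hmN : m < N) (R c : ℝ) (q : Fin N → ℝ) (x : Fin m → ℝ)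
    (i : ℕ) (h : i < m) :
    utilM4 R c q (fun j : Fin N => if h : (j : ℕ) < m then x ⟨(j : ℕ), h⟩ else 0)
        ⟨i, h.trans hmN⟩
      = utilM4 R c (fun j : Fin m => q (Fin.castLE hmN.le j)) x ⟨i, h⟩ := by
  unfold utilM4
  rw [sum_ext_aux hmN x]
  simp only [dif_pos h]
  rfl

theorem stmt_7 (N m : ℕ) (hm : 1 ≤ m) (hmN : m < N) (R c : ℝ) (hR : 0 < R) (hc : 0 < c)
    (q : Fin N → ℝ) (hq1 : ∀ i, q i ≤ 1) (hq0 : ∀ i, 0 < q i)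
    (hsort : ∀ i j : Fin N, i ≤ j → q j ≤ q i)
    (x : Fin m → ℝ)
    (hx : isPNE_M4 R c (fun i : Fin m => q (Fin.castLE hmN.le i)) x)
    (hsum : R * q ⟨m, hmN⟩ / c ≤ ∑ i, x i) :
    isPNE_M4 R c q
      (fun i : Fin N => if h : (i : ℕ) < m then x ⟨(i : ℕ), h⟩ else 0) := by
  obtain ⟨hbd, hne⟩ := hx
  set y : Fin N → ℝ := fun i => if h : (i : ℕ) < m then x ⟨(i : ℕ), h⟩ else 0 with hy
  have hS : ∑ j : Fin N, y j = ∑ i, x i := sum_ext_aux hmN x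
  have hqm : 0 < q ⟨m, hmN⟩ := hq0 _
  have hSpos : 0 < ∑ i, x i := lt_of_lt_of_le (by positivity) hsum
  constructor
  · intro i
    by_cases h : (i : ℕ) < m
    · have hb := hbd ⟨(i : ℕ), h⟩
      have hcast : Fin.castLE hmN.le ⟨(i : ℕ), h⟩ = i := by
        apply Fin.ext; rfl
      simp only [hy, dif_pos h]
      simpa [hcast] using hb
    · simp only [hy, dif_neg h]
      exact ⟨le_refl 0, (hq0 i).le⟩
  · intro i v hv
    by_cases h : (i : ℕ) < m
    · -- reduce to the small game
      have hieq : i = ⟨(i : ℕ), h.trans hmN⟩ := by apply Fin.ext; rfl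
      have hupd : Function.update y i v
          = fun j : Fin N => if hj : (j : ℕ) < m
              then Function.update x ⟨(i : ℕ), h⟩ v ⟨(j : ℕ), hj⟩ else 0 := by
        funext j
        by_cases hj : (j : ℕ) < m
        · simp only [Function.update_apply, hy, dif_pos hj]
          by_cases hji : j = i
          · have : (⟨(j : ℕ), hj⟩ : Fin m) = ⟨(i : ℕ), h⟩ := by
              apply Fin.ext; simp [hji]
            simp [hji, this]
          · have : (⟨(j : ℕ), hj⟩ : Fin m) ≠ ⟨(i : ℕ), h⟩ := by
              intro hcon
              apply hji
              exact Fin.ext (by simpa using congrArg Fin.val hcon)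
            simp [hji, this]
        · have hji : j ≠ i := by
            intro hcon; rw [hcon] at hj; exact hj h
          simp only [Function.update_apply, hy, dif_neg hj, if_neg hji]
      have key := hne ⟨(i : ℕ), h⟩ v (by
        have hcast : Fin.castLE hmN.le ⟨(i : ℕ), h⟩ = i := by apply Fin.ext; rfl
        simpa [hcast] using hv)
      calc utilM4 R c q (Function.update y i v) i
          = utilM4 R c (fun j : Fin m => q (Fin.castLE hmN.le j))
              (Function.update x ⟨(i : ℕ), h⟩ v) ⟨(i : ℕ), h⟩ := by
            rw [hupd]
            exact util_ext_aux hmN R c q _ (i : ℕ) h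
        _ ≤ utilM4 R c (fun j : Fin m => q (Fin.castLE hmN.le j)) x ⟨(i : ℕ), h⟩ := key
        _ = utilM4 R c q y i := by
            exact (util_ext_aux hmN R c q x (i : ℕ) h).symm
    · -- user outside the local game
      have hyi : y i = 0 := dif_neg h
      have hui : utilM4 R c q y i = 0 := by
        unfold utilM4
        rw [hS, if_pos hSpos, hyi]
        ring
      rw [hui]
      -- compute the sum of the updated profile
      have hsum' : ∑ j : Fin N, Function.update y i v j = (∑ i, x i) + v := by
        rw [Finset.sum_update_of_mem (Finset.mem_univ i)]
        have : ∑ j ∈ Finset.univ \ {i}, y j = ∑ j : Fin N, y j := by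
          apply Finset.sum_subset (Finset.sdiff_subset)
          intro j _ hj
          have : j = i := by
            by_contra hne'
            exact hj (Finset.mem_sdiff.2 ⟨Finset.mem_univ j,
              by simp [hne']⟩)
          rw [this, hyi]
        rw [this, hS]; ring
      have hv0 : 0 ≤ v := hv.1
      have hSv : 0 < (∑ i, x i) + v := by linarith
      unfold utilM4
      rw [hsum', if_pos hSv, Function.update_self]
      rcases eq_or_lt_of_le hv0 with hv0' | hv0'
      · rw [← hv0']; simp
      · have hqi : q i ≤ q ⟨m, hmN⟩ := by
          apply hsort
          exact not_lt.1 h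
        have h1 : R * q i ≤ c * ((∑ i, x i) + v) := by
          have : R * q ⟨m, hmN⟩ ≤ c * (∑ i, x i) := by
            rw [div_le_iff₀ hc] at hsum
            linarith [hsum]
          nlinarith
        rw [sub_nonpos, div_le_div_iff₀ hSv (hq0 i)]
        nlinarith [hq0 i]
end

section
/- Consider mechanism M4 (full information, proportional allocation, continuous action space) with n ≥ 2 users, reward R > 0, cost parameter c > 0, and types q_i ∈ (0,1]. Let Q = Σ_{i=1}^{n} q_i. If R ≥ c·Q²/(q_i·(Q − q_i)) for every user i, then the full-contribution profile x_i = q_i for all i is a pure Nash equilibrium. -/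
open Finset

theorem stmt_8 (n : ℕ) (hn : 2 ≤ n) (R c : ℝ) (hR : 0 < R) (hc : 0 < c)
    (q : Fin n → ℝ) (hq1 : ∀ i, q i ≤ 1) (hq0 : ∀ i, 0 < q i)
    (hRQ : ∀ i : Fin n,
      c * (∑ k, q k) ^ 2 / (q i * ((∑ k, q k) - q i)) ≤ R) :
    isPNE_M4 R c q q := by
  set Q := ∑ k, q k with hQdef
  have hQpos : 0 < Q := Finset.sum_pos (fun k _ => hq0 k) ⟨⟨0, by omega⟩, mem_univ _⟩
  constructor
  · intro i; exact ⟨(hq0 i).le, le_refl _⟩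
  · intro i y hy
    obtain ⟨hy0, hyq⟩ := hy
    have hqi := hq0 i
    -- S = Q - q i > 0
    obtain ⟨j, hj⟩ : ∃ j : Fin n, j ≠ i := by
      have : 1 < Fintype.card (Fin n) := by simp; omega
      exact Fintype.exists_ne_of_one_lt_card this i
    have herase : ∑ k ∈ univ.erase i, q k = Q - q i := by
      rw [Finset.sum_erase_eq_sub (mem_univ i)]
    have hS : 0 < Q - q i := by
      rw [← herase]
      exact Finset.sum_pos (fun k _ => hq0 k)
        ⟨j, Finset.mem_erase.mpr ⟨hj, mem_univ j⟩⟩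
    have hsum : ∑ k, Function.update q i y k = Q - q i + y := by
      rw [Finset.sum_update_of_mem (mem_univ i), ← herase,
        Finset.sdiff_singleton_eq_erase]
      ring
    set T := Q - q i + y with hTdef
    have hTpos : 0 < T := by positivity
    have hTQ : T ≤ Q := by simp only [hTdef]; linarith
    have hcond : c * Q ^ 2 ≤ R * (q i * (Q - q i)) := by
      have h := hRQ i
      rwa [div_le_iff₀ (by positivity)] at h
    unfold utilM4
    rw [hsum, if_pos hTpos, if_pos hQpos, Function.update_self]
    have hqc : c * q i / q i = c := by field_simp
    rw [hqc]
    have expand : R * q i / Q - c + c * y / q i - R * y / T =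
        ((q i - y) * (R * (q i * (Q - q i)) - c * Q * T)) / (Q * T * q i) := by
      field_simp
      ring
    have hnum : 0 ≤ (q i - y) * (R * (q i * (Q - q i)) - c * Q * T) := by
      apply mul_nonneg (by linarith)
      have : c * Q * T ≤ c * Q * Q :=
        mul_le_mul_of_nonneg_left hTQ (by positivity)
      nlinarith
    have : 0 ≤ R * q i / Q - c + c * y / q i - R * y / T := by
      rw [expand]; positivity
    linarith
end

section
/- Consider mechanism M4 (full information, proportional allocation, continuous action space) with n users, reward R ≥ 4c, cost parameter c > 0, and types sorted nonincreasingly: 1 ≥ q_1 ≥ q_2 ≥ … ≥ q_n > 0. Fix m with 1 ≤ m < n, and let x be a profile with x_i = q_i for all i ≤ m and, for each i > m, 0 < x_i < q_i and x_i = √(R·q_i·x_{−i}/c) − x_{−i}, where x_{−i} = Σ_{j ≠ i} x_j (i.e., every user i > m plays her unconstrained best response). Let S = Σ_{i=1}^{n} x_i. If (R·q_1/(2c))·(1 − √(1 − 4c/R)) ≤ S ≤ (R·q_m/(2c))·(1 + √(1 − 4c/R)), then x is a pure Nash equilibrium of the n-user game. -/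
open Finset

lemma util_step (R c q s t y : ℝ) (hq : 0 < q) (hst : 0 < s + t) (hsy : 0 < s + y)
    (hkey : 0 ≤ (t - y) * (R * q * s - c * (s + t) * (s + y))) :
    R * y / (s + y) - c * y / q ≤ R * t / (s + t) - c * t / q := by
  have hid : (R * t / (s + t) - c * t / q) - (R * y / (s + y) - c * y / q)
      = (t - y) * (R * q * s - c * (s + t) * (s + y)) / ((s + t) * (s + y) * q) := by
    field_simp
    ring
  have hpos : (0:ℝ) ≤ (t - y) * (R * q * s - c * (s + t) * (s + y)) / ((s + t) * (s + y) * q) :=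
    div_nonneg hkey (by positivity)
  linarith [hid ▸ hpos]

theorem stmt_9 (n m : ℕ) (hm : 1 ≤ m) (hmn : m < n) (R c : ℝ) (hc : 0 < c)
    (hR : 4 * c ≤ R)
    (q : Fin n → ℝ) (hq1 : ∀ i, q i ≤ 1) (hq0 : ∀ i, 0 < q i)
    (hsort : ∀ i j : Fin n, i ≤ j → q j ≤ q i)
    (x : Fin n → ℝ)
    (htop : ∀ i : Fin n, (i : ℕ) < m → x i = q i)
    (hbr : ∀ i : Fin n, m ≤ (i : ℕ) →
      0 < x i ∧ x i < q i ∧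
        x i = Real.sqrt (R * q i * ((∑ j, x j) - x i) / c) - ((∑ j, x j) - x i))
    (hSl : R * q ⟨0, by omega⟩ / (2 * c) * (1 - Real.sqrt (1 - 4 * c / R)) ≤ ∑ i, x i)
    (hSu : (∑ i, x i) ≤ R * q ⟨m - 1, by omega⟩ / (2 * c) * (1 + Real.sqrt (1 - 4 * c / R))) :
    isPNE_M4 R c q x := by
  have hR0 : 0 < R := by linarith
  set S := ∑ i, x i with hSdef
  have hxpos : ∀ j, 0 < x j := by
    intro j
    by_cases h : (j : ℕ) < m
    · rw [htop j h]; exact hq0 j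
    · exact (hbr j (le_of_not_gt h)).1
  have hn : 0 < n := by omega
  have hS : 0 < S :=
    Finset.sum_pos (fun j _ => hxpos j) ⟨⟨0, hn⟩, Finset.mem_univ _⟩
  have hs : ∀ i : Fin n, 0 < S - x i := by
    intro i
    have hj : ∃ j : Fin n, j ≠ i := by
      rcases Nat.lt_or_ge 0 i.val with h | h
      · exact ⟨⟨0, hn⟩, by simp [Fin.ext_iff]; omega⟩
      · exact ⟨⟨1, by omega⟩, by simp [Fin.ext_iff]; omega⟩
    obtain ⟨j, hj⟩ := hj
    have herase : ∑ k ∈ Finset.univ.erase i, x k = S - x i := by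
      rw [Finset.sum_erase_eq_sub (Finset.mem_univ i)]
    have hpos : 0 < ∑ k ∈ Finset.univ.erase i, x k :=
      Finset.sum_pos (fun k _ => hxpos k) ⟨j, Finset.mem_erase.2 ⟨hj, Finset.mem_univ j⟩⟩
    linarith [herase ▸ hpos]
  -- equality for best-responders
  have heqkey : ∀ i : Fin n, m ≤ (i : ℕ) → c * S ^ 2 = R * q i * (S - x i) := by
    intro i hi
    obtain ⟨_, _, heq⟩ := hbr i hi
    have hS_eq : Real.sqrt (R * q i * (S - x i) / c) = S := by linarith
    have hsq : Real.sqrt (R * q i * (S - x i) / c) ^ 2 = R * q i * (S - x i) / c :=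
      Real.sq_sqrt (by have := hs i; have := hq0 i; positivity)
    rw [hS_eq] at hsq
    field_simp at hsq
    linarith
  -- inequality for the top-m players
  have hineq : ∀ i : Fin n, (i : ℕ) < m → c * S ^ 2 ≤ R * q i * (S - q i) := by
    intro i hi
    set e := Real.sqrt (1 - 4 * c / R) with he
    have harg0 : (0:ℝ) ≤ 1 - 4 * c / R := by
      have : 4 * c / R ≤ 1 := by rw [div_le_one hR0]; linarith
      linarith
    have he0 : 0 ≤ e := Real.sqrt_nonneg _
    have he1 : e ≤ 1 := by
      rw [he]
      have h4 : (0:ℝ) ≤ 4 * c / R := by positivity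
      calc Real.sqrt (1 - 4 * c / R) ≤ Real.sqrt 1 := Real.sqrt_le_sqrt (by linarith)
        _ = 1 := Real.sqrt_one
    have he2 : e ^ 2 = 1 - 4 * c / R := Real.sq_sqrt harg0
    have hRe : R * e ^ 2 = R - 4 * c := by
      rw [he2]; field_simp
    have hq1i : q i ≤ q ⟨0, by omega⟩ := hsort ⟨0, by omega⟩ i (by simp [Fin.le_def])
    have hqmi : q ⟨m - 1, by omega⟩ ≤ q i := hsort i ⟨m - 1, by omega⟩ (by simp [Fin.le_def]; omega)
    have hl : R * q i * (1 - e) ≤ 2 * c * S := by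
      have h1 : R * q ⟨0, by omega⟩ * (1 - e) ≤ 2 * c * S := by
        have := hSl
        rw [div_mul_eq_mul_div, div_le_iff₀ (by positivity : (0:ℝ) < 2 * c)] at this
        linarith
      have h2 : R * q i * (1 - e) ≤ R * q ⟨0, by omega⟩ * (1 - e) := by
        apply mul_le_mul_of_nonneg_right _ (by linarith)
        exact mul_le_mul_of_nonneg_left hq1i hR0.le
      linarith
    have hu : 2 * c * S ≤ R * q i * (1 + e) := by
      have h1 : 2 * c * S ≤ R * q ⟨m - 1, by omega⟩ * (1 + e) := by
        have := hSu
        rw [div_mul_eq_mul_div, le_div_iff₀ (by positivity : (0:ℝ) < 2 * c)] at this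
        linarith
      have h2 : R * q ⟨m - 1, by omega⟩ * (1 + e) ≤ R * q i * (1 + e) := by
        apply mul_le_mul_of_nonneg_right _ (by linarith)
        exact mul_le_mul_of_nonneg_left hqmi hR0.le
      linarith
    have hprod : 0 ≤ (2 * c * S - R * q i * (1 - e)) * (R * q i * (1 + e) - 2 * c * S) :=
      mul_nonneg (by linarith) (by linarith)
    have hRe2 : R * (q i) ^ 2 * (R * e ^ 2) = R * (q i) ^ 2 * (R - 4 * c) := by rw [hRe]
    nlinarith [hprod, hRe2, hc, mul_pos hc hc, sq_nonneg (q i)]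
  constructor
  · intro i
    by_cases h : (i : ℕ) < m
    · rw [htop i h]; exact ⟨(hq0 i).le, le_refl _⟩
    · obtain ⟨h1, h2, _⟩ := hbr i (le_of_not_gt h)
      exact ⟨h1.le, h2.le⟩
  · intro i y hy
    obtain ⟨hy0, hyq⟩ := hy
    have hsi := hs i
    have hsum_upd : ∑ j, Function.update x i y j = S - x i + y := by
      rw [Finset.sum_update_of_mem (Finset.mem_univ i)]
      have : Finset.univ \ {i} = Finset.univ.erase i := by
        ext k; simp [Finset.mem_erase, and_comm]
      rw [this, Finset.sum_erase_eq_sub (Finset.mem_univ i)]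
      ring
    rw [utilM4, utilM4, if_pos hS, hsum_upd, if_pos (by linarith), Function.update_self]
    have hSsplit : S = (S - x i) + x i := by ring
    rw [show R * x i / S = R * x i / ((S - x i) + x i) by rw [← hSsplit]]
    apply util_step R c (q i) (S - x i) (x i) y (hq0 i) (by linarith) (by linarith)
    by_cases h : (i : ℕ) < m
    · have hxi := htop i h
      have hk := hineq i h
      have hty : 0 ≤ x i - y := by rw [hxi]; linarith
      apply mul_nonneg hty
      have h1 : c * ((S - x i) + x i) * ((S - x i) + y) ≤ c * S ^ 2 := by
        have hA : (S - x i) + x i = S := by ring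
        rw [hA]
        have hle : (S - x i) + y ≤ S := by rw [hxi] at *; linarith
        nlinarith [hle, mul_pos hc hS]
      have hk' : c * S ^ 2 ≤ R * q i * (S - x i) := by rw [hxi] at *; linarith [hk]
      linarith
    · have hk := heqkey i (le_of_not_gt h)
      have hA : (S - x i) + x i = S := by ring
      rw [hA]
      nlinarith [sq_nonneg (x i - y), mul_pos hc hS, hk]
end

section
/- Consider mechanism M4 (full information, proportional allocation, continuous action space) with N ≥ 2 users, reward R > 0, cost parameter c > 0, and types q_i ∈ (0,1]. Let x be a pure Nash equilibrium in which every user plays an interior action, i.e., 0 < x_i < q_i for all i, and let H = Σ_{k=1}^{N} 1/q_k. Then Σ_{k=1}^{N} x_k = R·(N−1)/(c·H), and for every i, x_i = (R·(N−1)/(c·H))·(1 − (N−1)/(q_i·H)). -/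
/-!
At an interior equilibrium, user `i`'s utility as a function of her own action (the others'
total `T = S - x i` held fixed) has a local maximum at `x i`, so its derivative vanishes:
`R (S - x i) / S² = c / q i`. Summing over `i` gives `R (N - 1) / S = c H`, which determines
`S`, and substituting `c S / R = (N - 1) / H` back into the condition for `i` gives `x i`.
-/

open Finset

/-- The utility of a user of type `q` playing `y` while the others contribute `T` in total. -/
noncomputable def proportionalPayoff (R c q T y : ℝ) : ℝ :=
  R * y / (T + y) - c * y / q

theorem hasDerivAt_proportionalPayoff (R c q T : ℝ) {y : ℝ} (hy : T + y ≠ 0) :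
    HasDerivAt (proportionalPayoff R c q T) (R * T / (T + y) ^ 2 - c / q) y := by
  have hshare : HasDerivAt (fun z => R * z / (T + z))
      ((R * (T + y) - R * y * 1) / (T + y) ^ 2) y :=
    ((hasDerivAt_id y).const_mul R |>.congr_deriv (mul_one R)).div
      ((hasDerivAt_id y).const_add T) hy
  have hcost : HasDerivAt (fun z => c * z / q) (c / q) y := by
    simpa using ((hasDerivAt_id y).const_mul c).div_const q
  exact (hshare.sub hcost).congr_deriv (by ring)

theorem proportionalPayoff_foc {R c q T y : ℝ} (hy : T + y ≠ 0)
    (hmax : IsLocalMax (proportionalPayoff R c q T) y) :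
    R * T / (T + y) ^ 2 = c / q :=
  sub_eq_zero.1 <| (hasDerivAt_proportionalPayoff R c q T hy).deriv ▸ hmax.deriv_eq_zero

theorem utilM4_update_eq_proportionalPayoff {N : ℕ} (R c : ℝ) (q x : Fin N → ℝ) (i : Fin N)
    {y : ℝ} (hy : 0 < ∑ k, x k - x i + y) :
    utilM4 R c q (Function.update x i y) i =
      proportionalPayoff R c (q i) (∑ k, x k - x i) y := by
  have hsum : ∑ k, Function.update x i y k = ∑ k, x k - x i + y := by
    rw [sum_update_of_mem (mem_univ i), ← add_sum_erase _ _ (mem_univ i),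
      sdiff_singleton_eq_erase]
    ring
  simp only [utilM4, hsum, hy, if_true, Function.update_self, proportionalPayoff]

theorem isPNE_M4.foc {N : ℕ} {R c : ℝ} {q x : Fin N → ℝ} (hx : isPNE_M4 R c q x) (i : Fin N)
    (hi : 0 < x i ∧ x i < q i) :
    R * (∑ k, x k - x i) / (∑ k, x k) ^ 2 = c / q i := by
  have hothers : 0 ≤ ∑ k, x k - x i := by
    rw [← add_sum_erase _ _ (mem_univ i), add_sub_cancel_left]
    exact sum_nonneg fun k _ => (hx.1 k).1
  have hmax : IsLocalMax (proportionalPayoff R c (q i) (∑ k, x k - x i)) (x i) := by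
    filter_upwards [Ioo_mem_nhds hi.1 hi.2] with y hy
    have hpos : ∀ z, 0 < z → 0 < ∑ k, x k - x i + z := fun z hz => by linarith
    rw [← utilM4_update_eq_proportionalPayoff R c q x i (hpos y hy.1),
      ← utilM4_update_eq_proportionalPayoff R c q x i (hpos _ hi.1), Function.update_eq_self]
    exact hx.2 i y (Set.Ioo_subset_Icc_self hy)
  simpa using proportionalPayoff_foc (by simp; linarith) hmax

section ClosedForm

variable {ι : Type*} [Fintype ι] {R c : ℝ} {q x : ι → ℝ}

theorem sum_eq_of_foc (hc : c ≠ 0) (hq : ∀ i, 0 < q i) (hS : ∑ k, x k ≠ 0)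
    (hfoc : ∀ i, R * (∑ k, x k - x i) / (∑ k, x k) ^ 2 = c / q i) :
    ∑ k, x k = R * ((Fintype.card ι : ℝ) - 1) / (c * ∑ k, 1 / q k) := by
  set S := ∑ k, x k
  have hne : (univ : Finset ι).Nonempty := by
    by_contra h
    simp_all [S, not_nonempty_iff_eq_empty]
  have hH : 0 < ∑ k, 1 / q k := sum_pos (fun k _ => one_div_pos.2 (hq k)) hne
  have hsum : c * (∑ k, 1 / q k) * S = R * ((Fintype.card ι : ℝ) - 1) := by
    have h := sum_congr rfl fun i (_ : i ∈ univ) => hfoc i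
    rw [← sum_div, ← mul_sum, sum_sub_distrib, sum_const, card_univ, nsmul_eq_mul] at h
    simp only [div_eq_mul_one_div c, ← mul_sum] at h
    rw [← h]
    field_simp
    ring
  rw [eq_div_iff (by positivity), ← hsum]
  ring

theorem eq_mul_one_sub_of_foc (hR : R ≠ 0) (hc : c ≠ 0) {i : ι} (hqi : q i ≠ 0)
    (hS : ∑ k, x k ≠ 0) (hfoc : R * (∑ k, x k - x i) / (∑ k, x k) ^ 2 = c / q i)
    (hsum : ∑ k, x k = R * ((Fintype.card ι : ℝ) - 1) / (c * ∑ k, 1 / q k)) :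
    x i = (∑ k, x k) * (1 - ((Fintype.card ι : ℝ) - 1) / (q i * ∑ k, 1 / q k)) := by
  set S := ∑ k, x k
  set H := ∑ k, 1 / q k
  have hH : H ≠ 0 := fun h => hS (by simp [hsum, h])
  have hcS : c * S / R = ((Fintype.card ι : ℝ) - 1) / H := by
    rw [hsum]
    field_simp
  rw [div_eq_div_iff (pow_ne_zero 2 hS) hqi] at hfoc
  calc x i = S * (1 - c * S / R / q i) := by field_simp; linear_combination -hfoc
    _ = _ := by rw [hcS, div_div, mul_comm H]

end ClosedForm

theorem stmt_10_general (N : ℕ) (hN : 2 ≤ N) (R c : ℝ) (hR : 0 < R) (hc : 0 < c)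
    (q : Fin N → ℝ) (hq0 : ∀ i, 0 < q i)
    (x : Fin N → ℝ) (hx : isPNE_M4 R c q x)
    (hint : ∀ i, 0 < x i ∧ x i < q i) :
    (∑ k, x k) = R * ((N : ℝ) - 1) / (c * ∑ k, 1 / q k) ∧
      ∀ i, x i = R * ((N : ℝ) - 1) / (c * ∑ k, 1 / q k) *
        (1 - ((N : ℝ) - 1) / (q i * ∑ k, 1 / q k)) := by
  have : Nonempty (Fin N) := ⟨⟨0, by omega⟩⟩
  have hS : 0 < ∑ k, x k := sum_pos (fun i _ => (hint i).1) univ_nonempty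
  have hfoc i := hx.foc i (hint i)
  have hsum := sum_eq_of_foc hc.ne' hq0 hS.ne' hfoc
  have hx_eq i := eq_mul_one_sub_of_foc hR.ne' hc.ne' (hq0 i).ne' hS.ne' (hfoc i) hsum
  rw [Fintype.card_fin] at hsum hx_eq
  exact ⟨hsum, fun i => hsum ▸ hx_eq i⟩

theorem stmt_10 (N : ℕ) (hN : 2 ≤ N) (R c : ℝ) (hR : 0 < R) (hc : 0 < c)
    (q : Fin N → ℝ) (hq1 : ∀ i, q i ≤ 1) (hq0 : ∀ i, 0 < q i)
    (x : Fin N → ℝ) (hx : isPNE_M4 R c q x)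
    (hint : ∀ i, 0 < x i ∧ x i < q i) :
    (∑ k, x k) = R * ((N : ℝ) - 1) / (c * ∑ k, 1 / q k) ∧
      ∀ i, x i = R * ((N : ℝ) - 1) / (c * ∑ k, 1 / q k) *
        (1 - ((N : ℝ) - 1) / (q i * ∑ k, 1 / q k)) :=
  stmt_10_general N hN R c hR hc q hq0 x hx hint
end

section
/- Let N ≥ 2 and K be integers with 1 ≤ K ≤ N − 1, let R > K·c > 0, and let F : [0,1] → [0,1] be a continuous, strictly increasing CDF with F(0) = 0 and F(1) = 1. Define T(x) = Σ_{j=0}^{K−1} C(N−1, j) F(x)^{N−1−j} (1−F(x))^j, and let x* ∈ (0,1) satisfy T(x*) = c·K/R. For q ∈ [x*, 1] define P(q) = Σ_{n=0}^{N−K−1} C(N−1, n) F(x*)^n · Σ_{j=0}^{K−1} C(N−n−1, j) (F(q) − F(x*))^{N−1−n−j} (1−F(q))^j + Σ_{n=N−K}^{N−1} C(N−1, n) F(x*)^n (1−F(x*))^{N−1−n}. Then for every q with x* < q ≤ 1, P(q) > c·K/R. -/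
open Finset

/-!
Split `winProb` by the number `n` of other users who stay out. When at least `N - K` of them
stay out the user is among the top `K` whatever the others do, and reflecting `n ↦ N - 1 - n`
turns that part of the sum into `topKProb N K F xs = c K / R`. The remaining part, where fewer
than `N - K` stay out, is a sum of positive terms because `F xs < F q`.
-/

/-- The probability that a user contributing quality `x` is among the top `K`
of `N` users, when the other `N - 1` contributions are i.i.d. with CDF `F`. -/
noncomputable def topKProb (N K : ℕ) (F : ℝ → ℝ) (x : ℝ) : ℝ :=
  ∑ j ∈ Finset.range K,
    ((N - 1).choose j : ℝ) * F x ^ (N - 1 - j) * (1 - F x) ^ j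

/-- The probability that a participating user of type `q ≥ x*` is among the top
`K` contributors in mechanism M5, when each of the other `N - 1` users has type
drawn from `F` and participates iff her type is at least the cut-off `xs`. -/
noncomputable def winProb (N K : ℕ) (F : ℝ → ℝ) (xs q : ℝ) : ℝ :=
  (∑ n ∈ Finset.range (N - K), ((N - 1).choose n : ℝ) * F xs ^ n *
    ∑ j ∈ Finset.range K, ((N - n - 1).choose j : ℝ) *
      (F q - F xs) ^ (N - 1 - n - j) * (1 - F q) ^ j) +
  ∑ n ∈ Finset.Ico (N - K) N,
    ((N - 1).choose n : ℝ) * F xs ^ n * (1 - F xs) ^ (N - 1 - n)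

lemma sum_Ico_choose_mul_pow_eq_sum_range {N K : ℕ} (hKN : K ≤ N) (p : ℝ) :
    ∑ n ∈ Ico (N - K) N, ((N - 1).choose n : ℝ) * p ^ n * (1 - p) ^ (N - 1 - n) =
      ∑ j ∈ range K, ((N - 1).choose j : ℝ) * p ^ (N - 1 - j) * (1 - p) ^ j := by
  refine sum_nbij' (fun n => N - 1 - n) (fun j => N - 1 - j) ?_ ?_ ?_ ?_ ?_
  · intro n hn
    simp only [mem_Ico, mem_range] at hn ⊢
    omega
  · intro j hj
    simp only [mem_Ico, mem_range] at hj ⊢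
    omega
  · intro n hn
    simp only [mem_Ico] at hn
    omega
  · intro j hj
    simp only [mem_range] at hj
    omega
  · intro n hn
    have hn' : n ≤ N - 1 := by simp only [mem_Ico] at hn; omega
    rw [Nat.choose_symm hn', Nat.sub_sub_self hn']

lemma sum_range_choose_mul_pow_pos {m K : ℕ} {d e : ℝ} (hK : 0 < K) (hd : 0 < d) (he : 0 ≤ e) :
    0 < ∑ j ∈ range K, (m.choose j : ℝ) * d ^ (m - j) * e ^ j := by
  refine sum_pos' (fun j _ => by positivity) ⟨0, mem_range.2 hK, ?_⟩
  simpa using pow_pos hd m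

lemma topKProb_lt_winProb {N K : ℕ} {F : ℝ → ℝ} {xs q : ℝ} (hK : 0 < K) (hKN : K < N)
    (hxs : 0 < F xs) (hxq : F xs < F q) (hq : F q ≤ 1) :
    topKProb N K F xs < winProb N K F xs q := by
  rw [winProb, sum_Ico_choose_mul_pow_eq_sum_range hKN.le, ← topKProb]
  refine lt_add_of_pos_left _ (sum_pos (fun n hn => ?_) (nonempty_range_iff.2 (by omega)))
  have hinner : 0 < ∑ j ∈ range K, ((N - n - 1).choose j : ℝ) *
      (F q - F xs) ^ (N - 1 - n - j) * (1 - F q) ^ j := by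
    simpa only [Nat.sub_right_comm N n 1] using
      sum_range_choose_mul_pow_pos (m := N - n - 1) hK (sub_pos.2 hxq) (sub_nonneg.2 hq)
  have hchoose : 0 < (N - 1).choose n := Nat.choose_pos (by rw [mem_range] at hn; omega)
  exact mul_pos (mul_pos (by exact_mod_cast hchoose) (pow_pos hxs n)) hinner

theorem stmt_14_general (N K : ℕ) (hK : 1 ≤ K) (hKN : K ≤ N - 1)
    (R c : ℝ)
    (F : ℝ → ℝ)
    (hFmono : StrictMonoOn F (Set.Icc 0 1)) (hF0 : F 0 = 0) (hF1 : F 1 = 1)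
    (xs : ℝ) (hxs : xs ∈ Set.Ioo (0 : ℝ) 1)
    (hroot : topKProb N K F xs = c * K / R) :
    ∀ q : ℝ, xs < q → q ≤ 1 → c * K / R < winProb N K F xs q := by
  intro q hxq hq
  have mem_unitIcc {x : ℝ} (h0 : 0 ≤ x) (h1 : x ≤ 1) : x ∈ Set.Icc (0 : ℝ) 1 := ⟨h0, h1⟩
  have hxs_mem := mem_unitIcc hxs.1.le hxs.2.le
  have hq_mem := mem_unitIcc (hxs.1.trans hxq).le hq
  have hFxs : 0 < F xs := hF0 ▸ hFmono (mem_unitIcc le_rfl zero_le_one) hxs_mem hxs.1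
  have hFq : F q ≤ 1 := hF1 ▸ hFmono.monotoneOn hq_mem (mem_unitIcc zero_le_one le_rfl) hq
  rw [← hroot]
  exact topKProb_lt_winProb (by omega) (by omega) hFxs (hFmono hxs_mem hq_mem hxq) hFq

theorem stmt_14 (N K : ℕ) (hN : 2 ≤ N) (hK : 1 ≤ K) (hKN : K ≤ N - 1)
    (R c : ℝ) (hc : 0 < c) (hR : (K : ℝ) * c < R)
    (F : ℝ → ℝ) (hFcont : ContinuousOn F (Set.Icc 0 1))
    (hFmono : StrictMonoOn F (Set.Icc 0 1)) (hF0 : F 0 = 0) (hF1 : F 1 = 1)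
    (xs : ℝ) (hxs : xs ∈ Set.Ioo (0 : ℝ) 1)
    (hroot : topKProb N K F xs = c * K / R) :
    ∀ q : ℝ, xs < q → q ≤ 1 → c * K / R < winProb N K F xs q :=
  stmt_14_general N K hK hKN R c F hFmono hF0 hF1 xs hxs hroot
end

section
/- Let N ≥ 2 and K be integers with 1 ≤ K ≤ N − 1, let R > 0 and c > 0, and let F : [0,1] → [0,1] be continuously differentiable, nondecreasing, with F(0) = 0 and F(1) = 1. Define T(x) = Σ_{j=0}^{K−1} C(N−1, j) F(x)^{N−1−j} (1−F(x))^j and β(x) = (R·(N−1)/(c·K)) · C(N−2, K−1) · ∫_0^x t · F(t)^{N−K−1} · (1−F(t))^{K−1} · F′(t) dt, and assume β(x) ≤ x for all x ∈ [0,1]. Then for every q ∈ (0,1] and every x ∈ [0,1], (R/K)·T(x) − c·β(x)/q ≤ (R/K)·T(q) − c·β(q)/q. -/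
open Finset

/-- The candidate symmetric equilibrium strategy of mechanism M6. -/
noncomputable def strat (N K : ℕ) (R c : ℝ) (F : ℝ → ℝ) (x : ℝ) : ℝ :=
  R * ((N : ℝ) - 1) / (c * K) * ((N - 2).choose (K - 1) : ℝ) *
    ∫ t in (0 : ℝ)..x,
      t * F t ^ (N - K - 1) * (1 - F t) ^ (K - 1) * deriv F t

/-!
Let `T'` be the derivative of the top-`K` probability. In the variable `1 - F`, `T` is a partial
sum of the Bernstein basis of degree `N - 1`, whose derivative telescopes, giving
`T' = (N - 1) C(N-2, K-1) F^(N-K-1) (1 - F)^(K-1) F' ≥ 0`; and `β' = R / (c K) · t · T'`. Hence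
`u(q; q) - u(x; q) = R / (K q) ∫_x^q (q - t) T'(t) dt`, and the integrand has the sign of `q - t`,
so the integral is nonnegative on either side of `q`.
-/

open Polynomial intervalIntegral

theorem bernsteinPolynomial.derivative_sum_range_succ (R : Type*) [CommRing R] (n k : ℕ) :
    derivative (∑ ν ∈ range (k + 1), bernsteinPolynomial R (n + 1) ν) =
      -(n + 1) * bernsteinPolynomial R n k := by
  induction k with
  | zero => simpa using bernsteinPolynomial.derivative_zero R (n + 1)
  | succ k ih =>
    rw [sum_range_succ, derivative_add, ih, bernsteinPolynomial.derivative_succ_aux]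
    ring

theorem intervalIntegral.integral_sub_mul_nonneg {g : ℝ → ℝ} {a b : ℝ}
    (hg : ∀ t ∈ Set.uIcc a b, 0 ≤ g t) : 0 ≤ ∫ t in a..b, (b - t) * g t := by
  rcases le_total a b with hab | hba
  · exact integral_nonneg hab fun t ht =>
      mul_nonneg (sub_nonneg.2 ht.2) (hg t (Set.Icc_subset_uIcc ht))
  · rw [integral_symm, ← integral_neg]
    exact integral_nonneg hba fun t ht => by
      nlinarith [hg t (Set.Icc_subset_uIcc' ht), ht.1]

theorem MonotoneOn.deriv_nonneg_of_mem_Icc {f : ℝ → ℝ} {a b x : ℝ}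
    (hf : MonotoneOn f (Set.Icc a b)) (hab : a < b) (hx : x ∈ Set.Icc a b)
    (hd : DifferentiableAt ℝ f x) : 0 ≤ deriv f x :=
  hd.derivWithin (uniqueDiffOn_Icc hab x hx) ▸ hf.derivWithin_nonneg

noncomputable def topKProbDeriv (N K : ℕ) (F : ℝ → ℝ) (t : ℝ) : ℝ :=
  ((N : ℝ) - 1) * ((N - 2).choose (K - 1) : ℝ) * F t ^ (N - K - 1) * (1 - F t) ^ (K - 1) *
    deriv F t

theorem topKProb_eq_eval (N K : ℕ) (F : ℝ → ℝ) (x : ℝ) :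
    topKProb N K F x = (∑ ν ∈ range K, bernsteinPolynomial ℝ (N - 1) ν).eval (1 - F x) := by
  simp only [topKProb, eval_finsetSum, bernsteinPolynomial, eval_mul, eval_pow, eval_sub, eval_one,
    eval_X, eval_natCast, sub_sub_cancel]
  exact sum_congr rfl fun j _ => by ring

theorem hasDerivAt_topKProb {N K : ℕ} (hN : 2 ≤ N) (hK : 1 ≤ K) {F : ℝ → ℝ} {t : ℝ}
    (hF : DifferentiableAt ℝ F t) : HasDerivAt (topKProb N K F) (topKProbDeriv N K F t) t := by
  obtain ⟨n, rfl⟩ : ∃ n, N = n + 2 := ⟨N - 2, by omega⟩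
  obtain ⟨k, rfl⟩ : ∃ k, K = k + 1 := ⟨K - 1, by omega⟩
  rw [funext (topKProb_eq_eval (n + 2) (k + 1) F)]
  refine ((Polynomial.hasDerivAt _ (1 - F t)).comp t (hF.hasDerivAt.const_sub 1)).congr_deriv ?_
  rw [show n + 2 - 1 = n + 1 by omega, bernsteinPolynomial.derivative_sum_range_succ]
  simp only [topKProbDeriv, bernsteinPolynomial, eval_mul, eval_neg, eval_pow, eval_sub, eval_one,
    eval_X, eval_natCast, eval_add, sub_sub_cancel]
  rw [show n + 2 - (k + 1) - 1 = n - k by omega]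
  simp only [Nat.add_sub_cancel]
  push_cast
  ring

theorem continuous_topKProbDeriv (N K : ℕ) {F : ℝ → ℝ} (hF : ContDiff ℝ 1 F) :
    Continuous (topKProbDeriv N K F) := by
  have hF' := hF.continuous_deriv le_rfl
  have hFc := hF.continuous
  unfold topKProbDeriv
  fun_prop

theorem topKProbDeriv_nonneg {N K : ℕ} (hN : 1 ≤ N) {F : ℝ → ℝ} {t : ℝ}
    (hF0 : 0 ≤ F t) (hF1 : F t ≤ 1) (hF' : 0 ≤ deriv F t) : 0 ≤ topKProbDeriv N K F t := by
  have hN' : 0 ≤ (N : ℝ) - 1 := sub_nonneg.2 (by exact_mod_cast hN)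
  have hF1' : 0 ≤ 1 - F t := sub_nonneg.2 hF1
  unfold topKProbDeriv
  positivity

theorem strat_eq_integral (N K : ℕ) (R c : ℝ) (F : ℝ → ℝ) (x : ℝ) :
    strat N K R c F x = R / (c * K) * ∫ t in (0 : ℝ)..x, t * topKProbDeriv N K F t := by
  rw [strat, ← integral_const_mul, ← integral_const_mul]
  congr 1 with t
  rw [topKProbDeriv]
  ring

/-- The paper's `u(x; q)`: the expected utility of a user of type `q` who contributes `β(x)`. -/
noncomputable def utility (N K : ℕ) (R c : ℝ) (F : ℝ → ℝ) (q x : ℝ) : ℝ :=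
  R / K * topKProb N K F x - c * strat N K R c F x / q

theorem utility_sub_utility {N K : ℕ} (hN : 2 ≤ N) (hK : 1 ≤ K) {R c : ℝ} (hc : c ≠ 0)
    {F : ℝ → ℝ} (hF : ContDiff ℝ 1 F) {q : ℝ} (hq : q ≠ 0) (x : ℝ) :
    utility N K R c F q q - utility N K R c F q x =
      R / (K * q) * ∫ t in x..q, (q - t) * topKProbDeriv N K F t := by
  have hρ := continuous_topKProbDeriv N K hF
  have htρ : Continuous fun t => t * topKProbDeriv N K F t := by fun_prop
  have hT : topKProb N K F q - topKProb N K F x = ∫ t in x..q, topKProbDeriv N K F t :=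
    (integral_eq_sub_of_hasDerivAt
      (fun t _ => hasDerivAt_topKProb hN hK (hF.differentiable one_ne_zero t))
      (hρ.intervalIntegrable x q)).symm
  have hβ : K * c * (strat N K R c F q - strat N K R c F x) =
      R * ∫ t in x..q, t * topKProbDeriv N K F t := by
    rw [strat_eq_integral, strat_eq_integral, ← mul_sub,
      integral_interval_sub_left (htρ.intervalIntegrable _ _) (htρ.intervalIntegrable _ _)]
    field_simp
  have hsplit : ∫ t in x..q, (q - t) * topKProbDeriv N K F t =
      (q * ∫ t in x..q, topKProbDeriv N K F t) - ∫ t in x..q, t * topKProbDeriv N K F t := by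
    rw [← integral_const_mul, ← integral_sub ((hρ.const_mul q).intervalIntegrable _ _)
      (htρ.intervalIntegrable _ _)]
    simp only [sub_mul]
  simp only [utility]
  rw [hsplit, ← hT]
  field_simp
  linear_combination -hβ

theorem stmt_15_general (N K : ℕ) (hN : 2 ≤ N) (hK : 1 ≤ K)
    (R c : ℝ) (hR : 0 < R) (hc : 0 < c)
    (F : ℝ → ℝ) (hFdiff : ContDiff ℝ 1 F)
    (hFmono : MonotoneOn F (Set.Icc 0 1)) (hF0 : F 0 = 0) (hF1 : F 1 = 1) :
    ∀ q ∈ Set.Ioc (0 : ℝ) 1, ∀ x ∈ Set.Icc (0 : ℝ) 1,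
      R / K * topKProb N K F x - c * strat N K R c F x / q ≤
        R / K * topKProb N K F q - c * strat N K R c F q / q := by
  intro q hq x hx
  have hρ : ∀ t ∈ Set.uIcc x q, 0 ≤ topKProbDeriv N K F t := by
    intro t ht
    have ht : t ∈ Set.Icc (0 : ℝ) 1 := Set.uIcc_subset_Icc hx (Set.Ioc_subset_Icc_self hq) ht
    refine topKProbDeriv_nonneg (by omega) ?_ ?_ ?_
    · simpa [hF0] using hFmono ⟨le_rfl, zero_le_one⟩ ht ht.1
    · simpa [hF1] using hFmono ht ⟨zero_le_one, le_rfl⟩ ht.2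
    · exact hFmono.deriv_nonneg_of_mem_Icc zero_lt_one ht (hFdiff.differentiable one_ne_zero t)
  change utility N K R c F q x ≤ utility N K R c F q q
  rw [← sub_nonneg, utility_sub_utility hN hK hc.ne' hFdiff hq.1.ne']
  have hq0 : 0 < q := hq.1
  exact mul_nonneg (by positivity) (integral_sub_mul_nonneg hρ)

theorem stmt_15 (N K : ℕ) (hN : 2 ≤ N) (hK : 1 ≤ K) (hKN : K ≤ N - 1)
    (R c : ℝ) (hR : 0 < R) (hc : 0 < c)
    (F : ℝ → ℝ) (hFdiff : ContDiff ℝ 1 F)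
    (hFmono : MonotoneOn F (Set.Icc 0 1)) (hF0 : F 0 = 0) (hF1 : F 1 = 1)
    (hfeas : ∀ x ∈ Set.Icc (0 : ℝ) 1, strat N K R c F x ≤ x) :
    ∀ q ∈ Set.Ioc (0 : ℝ) 1, ∀ x ∈ Set.Icc (0 : ℝ) 1,
      R / K * topKProb N K F x - c * strat N K R c F x / q ≤
        R / K * topKProb N K F q - c * strat N K R c F q / q :=
  stmt_15_general N K hN hK R c hR hc F hFdiff hFmono hF0 hF1
end

section
/- Let N ≥ 2 and K be integers with 1 ≤ K ≤ N−1 and R, c > 0. Define T(x) = Σ_{j=0}^{K−1} C(N−1, j) x^{N−1−j} (1−x)^j and β(x) = (R·(N−1)/(c·K)) · C(N−2, K−1) · ∫_0^x t^{N−K} (1−t)^{K−1} dt. Suppose 0 < x_1 < x_p ≤ 1 satisfy: β(x) ≤ x for all x ∈ [0, x_1], β(x_1) = x_1, β′(x) > 1 for all x ∈ (x_1, x_p), β′(x_p) = 1, and β′(x) ≤ 1 for all x ∈ (x_p, 1]. Define β*(x) = β(x) for x ∈ [0, x_1], β*(x) = x for x ∈ (x_1, x_p], and β*(x) = β(x)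 − β(x_p) + x_p for x ∈ (x_p, 1]. Then for every q ∈ (0, 1] and every x ∈ [0, 1] with β*(x) ≤ q, (R/K)·T(x) − c·β*(x)/q ≤ (R/K)·T(q) − c·β*(q)/q. -/
open Finset

/-- The probability that a user mimicking type `x` is among the top `K` of `N`
users when types are i.i.d. uniform on `[0,1]`. -/
noncomputable def topKProbUnif (N K : ℕ) (x : ℝ) : ℝ :=
  ∑ j ∈ Finset.range K,
    ((N - 1).choose j : ℝ) * x ^ (N - 1 - j) * (1 - x) ^ j

/-- The uncalibrated candidate symmetric equilibrium strategy of mechanism M6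
when the type distribution is uniform on `[0,1]`. -/
noncomputable def stratUnif (N K : ℕ) (R c : ℝ) (x : ℝ) : ℝ :=
  R * ((N : ℝ) - 1) / (c * K) * ((N - 2).choose (K - 1) : ℝ) *
    ∫ t in (0 : ℝ)..x, t ^ (N - K) * (1 - t) ^ (K - 1)

/-- The calibrated strategy `β*` obtained from `β` and the points `x₁ < xₚ`. -/
noncomputable def stratCal (N K : ℕ) (R c : ℝ) (x1 xp : ℝ) (x : ℝ) : ℝ :=
  if x ≤ x1 then stratUnif N K R c x
  else if x ≤ xp then x
  else stratUnif N K R c x - stratUnif N K R c xp + xp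

/-!
Let `g y = W y - (c / q) * β y` be the payoff of mimicking `y` under the uncalibrated strategy,
with `W = (R / K) * T`. The strategy `β` solves the first-order condition `c β' t = t W' t`, so
`g' y = (1 - y / q) W' y` and `g` peaks at `y = q`. The calibrated payoff is `g + (c / q) D` with
`D = β - β*`: it vanishes up to `x₁`, equals `β y - y` on `[x₁, xₚ]` (nondecreasing as `β' ≥ 1`
there) and is constant afterwards, so `D` is monotone. For `x ≤ q` both terms favour `q`; for
`x > q`, feasibility `β* x ≤ q < x` puts `x` and `q` on the same flat piece of `D`.
-/

/-- `stratCal N K R c` is definitionally `calibrated (stratUnif N K R c)`. -/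
noncomputable def calibrated (β : ℝ → ℝ) (x1 xp x : ℝ) : ℝ :=
  if x ≤ x1 then β x else if x ≤ xp then x else β x - β xp + xp

section Calibration

variable {β : ℝ → ℝ} {x1 xp : ℝ}

theorem sub_calibrated_of_le_left {x : ℝ} (hx : x ≤ x1) : β x - calibrated β x1 xp x = 0 := by
  simp [calibrated, hx]

theorem sub_calibrated_of_right_le (hx1p : x1 ≤ xp) (heq : β x1 = x1) {x : ℝ} (hx : xp ≤ x) :
    β x - calibrated β x1 xp x = β xp - xp := by
  rcases hx.eq_or_lt with rfl | hx
  · rcases hx1p.eq_or_lt with rfl | hx1p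
    · simp [calibrated, heq]
    · simp [calibrated, hx1p.not_ge]
  · simp only [calibrated, if_neg (hx1p.trans_lt hx).not_ge, if_neg hx.not_ge]
    ring

theorem monotone_sub_calibrated (hβ : Differentiable ℝ β) (hx1p : x1 ≤ xp) (heq : β x1 = x1)
    (hder : ∀ x ∈ Set.Ioo x1 xp, 1 ≤ deriv β x) :
    Monotone fun x => β x - calibrated β x1 xp x := by
  have hmid : MonotoneOn (fun x => β x - x) (Set.Icc x1 xp) := by
    have hdiff := hβ.sub differentiable_id
    refine monotoneOn_of_deriv_nonneg (convex_Icc _ _) hdiff.continuous.continuousOn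
      hdiff.differentiableOn fun x hx => ?_
    rw [interior_Icc] at hx
    rw [((hβ x).hasDerivAt.fun_sub (hasDerivAt_id' x)).deriv, sub_nonneg]
    exact hder x hx
  have heqOn : Set.EqOn (fun x => β x - calibrated β x1 xp x) (fun x => β x - x)
      (Set.Icc x1 xp) := by
    intro x hx
    rcases hx.1.eq_or_lt with rfl | hx1
    · dsimp only
      rw [sub_calibrated_of_le_left le_rfl, heq, sub_self]
    · simp [calibrated, hx1.not_ge, hx.2]
  have hext := Set.IccExtend_eq_self hx1p (fun x => β x - calibrated β x1 xp x)
    (fun x hx => by rw [sub_calibrated_of_le_left hx.le, sub_calibrated_of_le_left le_rfl])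
    (fun x hx => by rw [sub_calibrated_of_right_le hx1p heq hx.le,
      sub_calibrated_of_right_le hx1p heq le_rfl])
  rw [← hext]
  exact (Set.monotoneOn_iff_monotone.1 (hmid.congr heqOn.symm)).IccExtend hx1p

theorem sub_calibrated_eq_of_lt (hβ : MonotoneOn β (Set.Icc 0 1)) (hx1p : x1 ≤ xp)
    (heq : β x1 = x1) {q x : ℝ} (hq : 0 < q) (hqx : q < x) (hx : x ≤ 1)
    (hxq : calibrated β x1 xp x ≤ q) :
    β x - calibrated β x1 xp x = β q - calibrated β x1 xp q := by
  rcases le_or_gt x x1 with hxx1 | hx1x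
  · rw [sub_calibrated_of_le_left hxx1, sub_calibrated_of_le_left (hqx.le.trans hxx1)]
  rcases le_or_gt x xp with hxxp | hxpx
  · simp only [calibrated, hx1x.not_ge, hxxp, if_false, if_true] at hxq
    linarith
  simp only [calibrated, (hx1p.trans_lt hxpx).not_ge, hxpx.not_ge, if_false] at hxq
  have hxpq : xp ≤ q := by
    by_contra! hqxp
    linarith [hβ ⟨hq.le.trans hqxp.le, hxpx.le.trans hx⟩ ⟨hq.le.trans hqx.le, hx⟩ hxpx.le]
  rw [sub_calibrated_of_right_le hx1p heq hxpx.le, sub_calibrated_of_right_le hx1p heq hxpq]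

end Calibration

section BestResponse

variable {W β ρ : ℝ → ℝ} {c q : ℝ}

theorem payoff_le_truthful (hW : ∀ t, HasDerivAt W (ρ t) t)
    (hβ : ∀ t, HasDerivAt β (t * ρ t / c) t) (hρ : ∀ t ∈ Set.Icc (0 : ℝ) 1, 0 ≤ ρ t)
    (hc : c ≠ 0) (hq : q ∈ Set.Ioc (0 : ℝ) 1) {x : ℝ} (hx : x ∈ Set.Icc (0 : ℝ) 1) :
    W x - c / q * β x ≤ W q - c / q * β q := by
  obtain ⟨hq0, hq1⟩ := hq
  have hg : ∀ t, HasDerivAt (fun y => W y - c / q * β y) ((q - t) / q * ρ t) t := fun t =>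
    ((hW t).sub ((hβ t).const_mul (c / q))).congr_deriv (by field_simp)
  have hdiff : Differentiable ℝ fun y => W y - c / q * β y := fun t => (hg t).differentiableAt
  rcases le_total x q with hxq | hqx
  · refine monotoneOn_of_deriv_nonneg (convex_Icc 0 q) hdiff.continuous.continuousOn
      hdiff.differentiableOn (fun t ht => ?_) ⟨hx.1, hxq⟩ ⟨hq0.le, le_rfl⟩ hxq
    rw [interior_Icc] at ht
    rw [(hg t).deriv]
    exact mul_nonneg (div_nonneg (by linarith [ht.2]) hq0.le)
      (hρ t ⟨ht.1.le, by linarith [ht.2]⟩)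
  · refine antitoneOn_of_deriv_nonpos (convex_Icc q 1) hdiff.continuous.continuousOn
      hdiff.differentiableOn (fun t ht => ?_) ⟨le_rfl, hq1⟩ ⟨hqx, hx.2⟩ hqx
    rw [interior_Icc] at ht
    rw [(hg t).deriv]
    exact mul_nonpos_of_nonpos_of_nonneg
      (div_nonpos_of_nonpos_of_nonneg (by linarith [ht.1]) hq0.le)
      (hρ t ⟨by linarith [ht.1], ht.2.le⟩)

theorem calibrated_payoff_le_truthful (hW : ∀ t, HasDerivAt W (ρ t) t)
    (hβ : ∀ t, HasDerivAt β (t * ρ t / c) t) (hρ : ∀ t ∈ Set.Icc (0 : ℝ) 1, 0 ≤ ρ t)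
    (hc : 0 < c) {x1 xp : ℝ} (hx1p : x1 ≤ xp) (heq : β x1 = x1)
    (hder : ∀ x ∈ Set.Ioo x1 xp, 1 ≤ deriv β x) (hq : q ∈ Set.Ioc (0 : ℝ) 1) {x : ℝ}
    (hx : x ∈ Set.Icc (0 : ℝ) 1) (hxq : calibrated β x1 xp x ≤ q) :
    W x - c * calibrated β x1 xp x / q ≤ W q - c * calibrated β x1 xp q / q := by
  set D := fun y => β y - calibrated β x1 xp y
  have hβmono : MonotoneOn β (Set.Icc 0 1) :=
    monotoneOn_of_deriv_nonneg (convex_Icc 0 1)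
      (fun t _ => (hβ t).continuousAt.continuousWithinAt)
      (fun t _ => (hβ t).differentiableAt.differentiableWithinAt) fun t ht => by
        rw [interior_Icc] at ht
        rw [(hβ t).deriv]
        exact div_nonneg (mul_nonneg ht.1.le (hρ t ⟨ht.1.le, ht.2.le⟩)) hc.le
  have hD : D x ≤ D q := by
    rcases le_or_gt x q with hxq' | hqx
    · exact monotone_sub_calibrated (fun t => (hβ t).differentiableAt) hx1p heq hder hxq'
    · exact (sub_calibrated_eq_of_lt hβmono hx1p heq hq.1 hqx hx.2 hxq).le
  have hsplit : ∀ y, W y - c * calibrated β x1 xp y / q = (W y - c / q * β y) + c / q * D y :=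
    fun y => by simp only [D]; ring
  rw [hsplit, hsplit]
  exact add_le_add (payoff_le_truthful hW hβ hρ hc.ne' hq hx)
    (mul_le_mul_of_nonneg_left hD (div_nonneg hc.le hq.1.le))

end BestResponse

theorem hasDerivAt_sum_choose_mul_pow_mul_one_sub_pow (m k : ℕ) (x : ℝ) :
    HasDerivAt
      (fun y : ℝ =>
        ∑ j ∈ range (k + 1), ((m + 1).choose j : ℝ) * y ^ (m + 1 - j) * (1 - y) ^ j)
      ((m + 1) * m.choose k * x ^ (m - k) * (1 - x) ^ k) x := by
  induction k with
  | zero => simpa using (hasDerivAt_pow (m + 1) x)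
  | succ k ih =>
    simp_rw [sum_range_succ _ (k + 1), Nat.add_sub_add_right]
    have hpow := (hasDerivAt_pow (m - k) x).const_mul ((m + 1).choose (k + 1) : ℝ)
    have hsub := ((hasDerivAt_id x).const_sub 1).fun_pow (k + 1)
    refine (ih.fun_add (hpow.fun_mul hsub)).congr_deriv ?_
    have h₁ : ((m + 1).choose (k + 1) * (m - k : ℕ) : ℝ) = (m + 1) * m.choose (k + 1) := by
      have := Nat.choose_mul_succ_eq m (k + 1)
      rw [Nat.add_sub_add_right] at this
      exact_mod_cast this.symm.trans (mul_comm _ _)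
    have h₂ : ((m + 1).choose (k + 1) * (k + 1) : ℝ) = (m + 1) * m.choose k := by
      exact_mod_cast (Nat.add_one_mul_choose_eq m k).symm
    simp only [id, Nat.add_sub_cancel, Nat.sub_sub, Nat.cast_add_one]
    linear_combination
      (x ^ (m - (k + 1)) * (1 - x) ^ (k + 1)) * h₁ - (x ^ (m - k) * (1 - x) ^ k) * h₂

noncomputable def topKDensityUnif (N K : ℕ) (x : ℝ) : ℝ :=
  ((N : ℝ) - 1) * ((N - 2).choose (K - 1) : ℝ) * x ^ (N - 1 - K) * (1 - x) ^ (K - 1)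

theorem hasDerivAt_topKProbUnif {N K : ℕ} (hK : 1 ≤ K) (hKN : K ≤ N - 1) (x : ℝ) :
    HasDerivAt (topKProbUnif N K) (topKDensityUnif N K x) x := by
  obtain ⟨k, rfl⟩ : ∃ k, K = k + 1 := ⟨K - 1, by omega⟩
  obtain ⟨m, rfl⟩ : ∃ m, N = m + 2 := ⟨N - 2, by omega⟩
  convert hasDerivAt_sum_choose_mul_pow_mul_one_sub_pow m k x using 1
  · rfl
  · unfold topKDensityUnif
    push_cast
    ring

theorem topKDensityUnif_nonneg {N : ℕ} (K : ℕ) (hN : 1 ≤ N) {x : ℝ}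
    (hx : x ∈ Set.Icc 0 1) :
    0 ≤ topKDensityUnif N K x := by
  have hN' : (0 : ℝ) ≤ N - 1 := sub_nonneg.2 (by exact_mod_cast hN)
  have hx' : 0 ≤ 1 - x := sub_nonneg.2 hx.2
  have hx0 := hx.1
  unfold topKDensityUnif
  positivity

theorem hasDerivAt_stratUnif {N K : ℕ} (R c : ℝ) (hKN : K < N) (x : ℝ) :
    HasDerivAt (stratUnif N K R c) (x * (R / K * topKDensityUnif N K x) / c) x := by
  have hint : Continuous fun t : ℝ => t ^ (N - K) * (1 - t) ^ (K - 1) := by fun_prop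
  refine ((hint.integral_hasStrictDerivAt 0 x).hasDerivAt.const_mul _).congr_deriv ?_
  rw [topKDensityUnif, show N - K = N - 1 - K + 1 by omega, pow_succ]
  ring

theorem stmt_17_general (N K : ℕ) (hK : 1 ≤ K) (hKN : K ≤ N - 1)
    (R c : ℝ) (hR : 0 < R) (hc : 0 < c)
    (x1 xp : ℝ) (hx1p : x1 < xp)
    (heq : stratUnif N K R c x1 = x1)
    (hder1 : ∀ x ∈ Set.Ioo x1 xp, 1 < deriv (stratUnif N K R c) x) :
    ∀ q ∈ Set.Ioc (0 : ℝ) 1, ∀ x ∈ Set.Icc (0 : ℝ) 1,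
      stratCal N K R c x1 xp x ≤ q →
        R / K * topKProbUnif N K x - c * stratCal N K R c x1 xp x / q ≤
          R / K * topKProbUnif N K q - c * stratCal N K R c x1 xp q / q := by
  intro q hq x hx hxq
  exact calibrated_payoff_le_truthful (W := fun y => R / K * topKProbUnif N K y)
    (fun t => (hasDerivAt_topKProbUnif hK hKN t).const_mul _)
    (hasDerivAt_stratUnif R c (by omega))
    (fun t ht => mul_nonneg (by positivity) (topKDensityUnif_nonneg K (by omega) ht))
    hc hx1p.le heq (fun t ht => (hder1 t ht).le) hq hx hxq

theorem stmt_17 (N K : ℕ) (hN : 2 ≤ N) (hK : 1 ≤ K) (hKN : K ≤ N - 1)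
    (R c : ℝ) (hR : 0 < R) (hc : 0 < c)
    (x1 xp : ℝ) (hx1 : 0 < x1) (hx1p : x1 < xp) (hxp : xp ≤ 1)
    (hfeas : ∀ x ∈ Set.Icc (0 : ℝ) x1, stratUnif N K R c x ≤ x)
    (heq : stratUnif N K R c x1 = x1)
    (hder1 : ∀ x ∈ Set.Ioo x1 xp, 1 < deriv (stratUnif N K R c) x)
    (hderp : deriv (stratUnif N K R c) xp = 1)
    (hder2 : ∀ x ∈ Set.Ioc xp 1, deriv (stratUnif N K R c) x ≤ 1) :
    ∀ q ∈ Set.Ioc (0 : ℝ) 1, ∀ x ∈ Set.Icc (0 : ℝ) 1,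
      stratCal N K R c x1 xp x ≤ q →
        R / K * topKProbUnif N K x - c * stratCal N K R c x1 xp x / q ≤
          R / K * topKProbUnif N K q - c * stratCal N K R c x1 xp q / q :=
  stmt_17_general N K hK hKN R c hR hc x1 xp hx1p heq hder1
end

section
/- Let R > 0, c > 0 and q > 0, and for δ ∈ [0, R·q/(4c)] define l(δ) = (1/2)·(Rq/c − 2δ − √((Rq/c)² − 4δ·Rq/c)) and u(δ) = (1/2)·(Rq/c − 2δ + √((Rq/c)² − 4δ·Rq/c)). Then l is strictly increasing and u is strictly decreasing on [0, R·q/(4c)]. -/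
theorem stmt_18 (R c q : ℝ) (hR : 0 < R) (hc : 0 < c) (hq : 0 < q) :
    StrictMonoOn
      (fun δ : ℝ => 1 / 2 *
        (R * q / c - 2 * δ - Real.sqrt ((R * q / c) ^ 2 - 4 * δ * (R * q / c))))
      (Set.Icc 0 (R * q / (4 * c))) ∧
    StrictAntiOn
      (fun δ : ℝ => 1 / 2 *
        (R * q / c - 2 * δ + Real.sqrt ((R * q / c) ^ 2 - 4 * δ * (R * q / c))))
      (Set.Icc 0 (R * q / (4 * c))) := by
  set K := R * q / c with hK
  have hKpos : 0 < K := by rw [hK]; positivity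
  have hIcc : R * q / (4 * c) = K / 4 := by rw [hK]; ring
  have key : ∀ a b : ℝ, a ∈ Set.Icc 0 (R * q / (4 * c)) →
      b ∈ Set.Icc 0 (R * q / (4 * c)) → a < b →
      let s := Real.sqrt (K ^ 2 - 4 * a * K)
      let t := Real.sqrt (K ^ 2 - 4 * b * K)
      t < s ∧ s ≤ K ∧ s ^ 2 = K ^ 2 - 4 * a * K ∧ t ^ 2 = K ^ 2 - 4 * b * K ∧ 0 ≤ t := by
    intro a b ha hb hab
    rw [hIcc] at ha hb
    obtain ⟨ha0, ha4⟩ := ha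
    obtain ⟨hb0, hb4⟩ := hb
    have hib0 : (0:ℝ) ≤ K ^ 2 - 4 * b * K := by nlinarith
    have hia0 : (0:ℝ) ≤ K ^ 2 - 4 * a * K := by nlinarith
    have hs2 := Real.sq_sqrt hia0
    have ht2 := Real.sq_sqrt hib0
    have hs0 := Real.sqrt_nonneg (K ^ 2 - 4 * a * K)
    have ht0 := Real.sqrt_nonneg (K ^ 2 - 4 * b * K)
    refine ⟨?_, ?_, hs2, ht2, ht0⟩
    · nlinarith
    · nlinarith
  constructor
  · intro a ha b hb hab
    obtain ⟨hts, hsK, hs2, ht2, ht0⟩ := key a b ha hb hab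
    simp only
    set s := Real.sqrt (K ^ 2 - 4 * a * K)
    set t := Real.sqrt (K ^ 2 - 4 * b * K)
    have hprod : 0 < (s - t) * (2 * K - (s + t)) := by
      apply mul_pos (by linarith)
      nlinarith
    nlinarith
  · intro a ha b hb hab
    obtain ⟨hts, hsK, hs2, ht2, ht0⟩ := key a b ha hb hab
    simp only
    linarith
end

section
/- Let R > 0, c > 0, q_1 > 0, q_2 > 0, δ ≥ 0, and let x_1, x_2 be real numbers with x_1 + x_2 + δ > 0 satisfying x_1 = √(R·q_1·(δ + x_2)/c) − (δ + x_2) and x_2 = √(R·q_2·(δ + x_1)/c) − (δ + x_1). Let Q = c/q_1 + c/q_2. Then x_1 + x_2 = (1/2)·(R/Q + √((R/Q)² + 4δ·R/Q)) − δ. -/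
theorem stmt_19 (R c q1 q2 δ x1 x2 : ℝ) (hR : 0 < R) (hc : 0 < c)
    (hq1 : 0 < q1) (hq2 : 0 < q2) (hδ : 0 ≤ δ)
    (hpos : 0 < x1 + x2 + δ)
    (h1 : x1 = Real.sqrt (R * q1 * (δ + x2) / c) - (δ + x2))
    (h2 : x2 = Real.sqrt (R * q2 * (δ + x1) / c) - (δ + x1)) :
    x1 + x2 =
      1 / 2 * (R / (c / q1 + c / q2) +
        Real.sqrt ((R / (c / q1 + c / q2)) ^ 2 +
          4 * δ * (R / (c / q1 + c / q2)))) - δ := by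
  set s := x1 + x2 + δ with hs
  have hQ : 0 < c / q1 + c / q2 := by positivity
  set A := R / (c / q1 + c / q2) with hA
  have hApos : 0 < A := by positivity
  -- s = sqrt of each expression
  have hs1 : s = Real.sqrt (R * q1 * (δ + x2) / c) := by
    rw [hs]; linarith [h1]
  have hs2 : s = Real.sqrt (R * q2 * (δ + x1) / c) := by
    rw [hs]; linarith [h2]
  have ht1 : 0 ≤ R * q1 * (δ + x2) / c := by
    by_contra h
    push_neg at h
    rw [Real.sqrt_eq_zero_of_nonpos h.le] at hs1
    linarith [hpos, hs1]
  have ht2 : 0 ≤ R * q2 * (δ + x1) / c := by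
    by_contra h
    push_neg at h
    rw [Real.sqrt_eq_zero_of_nonpos h.le] at hs2
    linarith [hpos, hs2]
  have hsq1 : s ^ 2 = R * q1 * (δ + x2) / c := by
    rw [hs1, Real.sq_sqrt ht1]
  have hsq2 : s ^ 2 = R * q2 * (δ + x1) / c := by
    rw [hs2, Real.sq_sqrt ht2]
  -- δ + x2 and δ + x1 in terms of s
  have e1 : δ + x2 = c * s ^ 2 / (R * q1) := by
    field_simp at hsq1 ⊢
    linarith [hsq1]
  have e2 : δ + x1 = c * s ^ 2 / (R * q2) := by
    field_simp at hsq2 ⊢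
    linarith [hsq2]
  -- key quadratic: s^2 = A * (s + δ)
  have hkey : s ^ 2 = A * (s + δ) := by
    have hsum : s + δ = c * s ^ 2 / (R * q1) + c * s ^ 2 / (R * q2) := by
      rw [hs]; linarith [e1, e2]
    rw [hA]
    field_simp at hsum ⊢
    nlinarith [hsum]
  have hsA : A ≤ s := by
    nlinarith [hkey, hpos, mul_nonneg hApos.le hδ]
  have hroot : Real.sqrt (A ^ 2 + 4 * δ * A) = 2 * s - A := by
    have : A ^ 2 + 4 * δ * A = (2 * s - A) ^ 2 := by linear_combination -4 * hkey
    rw [this, Real.sqrt_sq (by linarith : 0 ≤ 2 * s - A)]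
  rw [hroot]
  linarith [hA]
end
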